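/- arXiv:1306.3713 — 10 statements merged into one kernel-verified Lean document; each statement's English description precedes it below -/
import Mathlib

section
/- Let n ≥ 0 and let α, β be real numbers with α ≠ 0, and set η = β/α. Let M be the (n+1)×(n+1) real tridiagonal matrix with diagonal entries M_{ℓ,ℓ} = −(n−ℓ)α − ℓβ for ℓ = 0,…,n, superdiagonal entries M_{ℓ,ℓ+1} = (ℓ+1)β, and subdiagonal entries M_{ℓ+1,ℓ} = (n−ℓ)α. For each k = 0,1,…,n, the vector u_k = (u_{k,0}, u_{k,1}, …, u_{k,n}) with components u_{k,ℓ} = Σ_{j=max(0,ℓ−k)}^{min(ℓ,n−k)} (−1)^{k+ℓ+j} η^{n−k−j} C(k, ℓ−j) C(n−k, j) satisfies M u_k = −k(α+β) u_k; that is, u_k is an eigenvector of M with eigenvalue −k(α+β). -/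
open Polynomial Finset

lemma coeff_one_sub_X_pow (a m : ℕ) :
    ((1 - X : Polynomial ℝ) ^ a).coeff m = (-1 : ℝ) ^ m * (a.choose m : ℝ) := by
  have h1 : (1 - X : Polynomial ℝ) = C (-1 : ℝ) * (X + C (-1 : ℝ)) := by
    simp [mul_add, ← C_mul, C_neg]; ring
  rw [h1, mul_pow, ← C_pow, coeff_C_mul, coeff_X_add_C_pow]
  by_cases h : m ≤ a
  · have h2 : a + (a - m) = m + 2 * (a - m) := by omega
    have h3 : (-1 : ℝ) ^ a * (-1 : ℝ) ^ (a - m) = (-1 : ℝ) ^ m := by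
      rw [← pow_add, h2, pow_add, pow_mul]; norm_num
    rw [← mul_assoc, h3]
  · rw [Nat.choose_eq_zero_of_lt (by omega)]; simp

lemma coeff_p (n k : ℕ) (η : ℝ) (ℓ : ℕ) :
    ((C ((-1:ℝ)^k) * ((1 - X)^k * (X + C η)^(n-k))) : Polynomial ℝ).coeff ℓ =
    ∑ j ∈ Finset.Icc (ℓ - k) (min ℓ (n - k)),
      (-1:ℝ)^(k+ℓ+j) * η^(n-k-j) * (k.choose (ℓ-j) : ℝ) * ((n-k).choose j : ℝ) := by
  have hsub : Finset.Icc (ℓ - k) (min ℓ (n - k)) ⊆ Finset.range (ℓ+1) := by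
    intro j hj
    simp only [Finset.mem_Icc, Finset.mem_range] at *
    omega
  rw [coeff_C_mul, coeff_mul, Finset.Nat.sum_antidiagonal_eq_sum_range_succ_mk]
  rw [Finset.sum_subset hsub (by
    intro j hj hnj
    simp only [Finset.mem_Icc, Finset.mem_range, le_min_iff, not_and, not_le] at hj hnj
    by_cases h : j ≤ n - k
    · have : k < ℓ - j := by omega
      rw [Nat.choose_eq_zero_of_lt this]; simp
    · rw [Nat.choose_eq_zero_of_lt (show n - k < j by omega)]; simp)]
  rw [← Finset.sum_range_reflect, Finset.mul_sum]
  refine Finset.sum_congr rfl fun j hj => ?_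
  have hjl : j ≤ ℓ := by simp only [Finset.mem_range] at hj; omega
  have h1 : ℓ + 1 - 1 - j = ℓ - j := by omega
  have h2 : ℓ - (ℓ - j) = j := by omega
  rw [h1, coeff_one_sub_X_pow, coeff_X_add_C_pow, h2]
  have h3 : k + ℓ + j = k + (ℓ - j) + 2 * j := by omega
  rw [h3, pow_add, pow_add, pow_mul]
  norm_num
  ring

lemma poly_ode (a b : ℕ) (α η : ℝ) :
    C (((a + b : ℕ) : ℝ) * α) * (X * (C ((-1:ℝ)^a) * ((1 - X)^a * (X + C η)^b)))
      + C (α * η) * derivative (C ((-1:ℝ)^a) * ((1 - X)^a * (X + C η)^b))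
      + C (α - α * η) * (X * derivative (C ((-1:ℝ)^a) * ((1 - X)^a * (X + C η)^b)))
    = C (((a + b : ℕ) : ℝ) * α) * (C ((-1:ℝ)^a) * ((1 - X)^a * (X + C η)^b))
      + C α * (X * (X * derivative (C ((-1:ℝ)^a) * ((1 - X)^a * (X + C η)^b))))
      + C (-(a : ℝ) * (α + α * η)) * (C ((-1:ℝ)^a) * ((1 - X)^a * (X + C η)^b)) := by
  rcases a with _ | a <;> rcases b with _ | b <;>
    simp only [derivative_mul, derivative_C, derivative_pow, derivative_X, derivative_one,
      derivative_sub, derivative_X_add_C, Nat.add_sub_cancel, pow_zero, Nat.cast_add,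
      Nat.cast_succ, Nat.cast_zero, map_sub, map_add, map_mul, map_neg, map_pow, map_one,
      map_natCast, C_0, zero_mul, mul_zero, zero_add, add_zero, mul_one, sub_zero,
      zero_sub, Nat.cast_one] <;>
    ring

/-- The vector `u_k` with components given by \eqref{ukl} is an eigenvector of the
deposition–evaporation matrix `M` with eigenvalue `-k(α+β)`. -/
theorem stmt_0 (n : ℕ) (α β : ℝ) (hα : α ≠ 0) (η : ℝ) (hη : η = β / α)
    (M : Matrix (Fin (n + 1)) (Fin (n + 1)) ℝ)
    (hM : M = Matrix.of fun i j : Fin (n + 1) =>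
      if i.val = j.val then -((n : ℝ) - i.val) * α - (i.val : ℝ) * β
      else if j.val = i.val + 1 then ((i.val : ℝ) + 1) * β
      else if i.val = j.val + 1 then ((n : ℝ) - j.val) * α
      else 0)
    (k : ℕ) (hk : k ≤ n)
    (u : Fin (n + 1) → ℝ)
    (hu : u = fun ℓ : Fin (n + 1) =>
      ∑ j ∈ Finset.Icc (ℓ.val - k) (min ℓ.val (n - k)),
        (-1 : ℝ) ^ (k + ℓ.val + j) * η ^ (n - k - j) *
          (Nat.choose k (ℓ.val - j) : ℝ) * (Nat.choose (n - k) j : ℝ)) :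
    M.mulVec u = (-(k : ℝ) * (α + β)) • u := by
  have hβ : β = α * η := by rw [hη]; field_simp
  set p : Polynomial ℝ := C ((-1:ℝ)^k) * ((1 - X)^k * (X + C η)^(n-k)) with hp
  have hu' : ∀ i : Fin (n+1), u i = p.coeff i.val := by
    intro i; rw [hu]; exact (coeff_p n k η i.val).symm
  -- degree bound
  have hdeg : p.natDegree ≤ n := by
    have h1 : ((1 - X : Polynomial ℝ)).natDegree ≤ 1 := by
      refine le_trans (natDegree_sub_le _ _) ?_
      simp [natDegree_one, natDegree_X]
    have h2 : ((X + C η : Polynomial ℝ)).natDegree ≤ 1 :=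
      le_of_eq (natDegree_X_add_C η)
    calc p.natDegree ≤ (C ((-1:ℝ)^k)).natDegree
          + ((1 - X : Polynomial ℝ)^k * (X + C η)^(n-k)).natDegree := natDegree_mul_le
      _ ≤ 0 + (((1 - X : Polynomial ℝ)^k).natDegree
          + (((X + C η : Polynomial ℝ))^(n-k)).natDegree) := by
          gcongr
          · exact le_of_eq (natDegree_C _)
          · exact natDegree_mul_le
      _ ≤ 0 + (k * 1 + (n-k) * 1) := by
          gcongr
          · exact le_trans (natDegree_pow_le) (by gcongr)
          · exact le_trans (natDegree_pow_le) (by gcongr)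
      _ ≤ n := by omega
  have hcn1 : p.coeff (n+1) = 0 :=
    coeff_eq_zero_of_natDegree_lt (lt_of_le_of_lt hdeg (by omega))
  -- the polynomial identity
  have E := poly_ode k (n-k) α η
  rw [show k + (n-k) = n from by omega] at E
  rw [← hβ, ← hp] at E
  -- recurrences
  have rec0 : -(n:ℝ) * α * p.coeff 0 + β * p.coeff 1 = -(k:ℝ) * (α+β) * p.coeff 0 := by
    have h0 := congrArg (fun q => Polynomial.coeff q 0) E
    simp only [coeff_add, coeff_C_mul, coeff_C_zero, mul_coeff_zero, coeff_X_zero, zero_mul,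
      mul_zero, coeff_derivative, add_zero, zero_add, Nat.cast_zero] at h0
    linear_combination h0
  have recS : ∀ m : ℕ,
      ((n:ℝ) - m) * α * p.coeff m
        + (-((n:ℝ) - (m+1)) * α - ((m:ℝ)+1) * β) * p.coeff (m+1)
        + ((m:ℝ)+2) * β * p.coeff (m+2)
      = -(k:ℝ) * (α+β) * p.coeff (m+1) := by
    intro m
    have h0 := congrArg (fun q => Polynomial.coeff q (m+1)) E
    cases m with
    | zero =>
      simp only [coeff_add, coeff_C_mul, coeff_C_zero, coeff_X_mul, coeff_derivative,
        mul_coeff_zero, coeff_X_zero, zero_mul, mul_zero, add_zero, zero_add, Nat.cast_zero,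
        Nat.cast_one] at h0 ⊢
      push_cast at h0 ⊢
      linear_combination h0
    | succ t =>
      simp only [coeff_add, coeff_C_mul, coeff_X_mul, coeff_derivative] at h0
      push_cast at h0 ⊢
      linear_combination h0
  -- the key pointwise computation
  have main : ∀ ℓ : ℕ, ℓ ≤ n →
      ∑ m ∈ Finset.range (n+2),
        (if ℓ = m then -((n : ℝ) - ℓ) * α - (ℓ : ℝ) * β
          else if m = ℓ + 1 then ((ℓ : ℝ) + 1) * β
          else if ℓ = m + 1 then ((n : ℝ) - m) * α
          else 0) * p.coeff m
      = -(k:ℝ) * (α+β) * p.coeff ℓ := by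
    intro ℓ hℓ
    have hsplit : ∀ m ∈ Finset.range (n+2),
        (if ℓ = m then -((n : ℝ) - ℓ) * α - (ℓ : ℝ) * β
          else if m = ℓ + 1 then ((ℓ : ℝ) + 1) * β
          else if ℓ = m + 1 then ((n : ℝ) - m) * α
          else 0) * p.coeff m
        = (if ℓ = m then (-((n : ℝ) - ℓ) * α - (ℓ : ℝ) * β) * p.coeff m else 0)
          + (if m = ℓ + 1 then (((ℓ : ℝ) + 1) * β) * p.coeff m else 0)
          + (if ℓ = m + 1 then (((n : ℝ) - m) * α) * p.coeff m else 0) := by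
      intro m _
      split_ifs <;> first | ring1 | (exfalso; omega)
    rw [Finset.sum_congr rfl hsplit]
    rw [Finset.sum_add_distrib, Finset.sum_add_distrib]
    rw [Finset.sum_ite_eq (Finset.range (n+2)) ℓ (fun m => (-((n : ℝ) - ℓ) * α - (ℓ : ℝ) * β) * p.coeff m)]
    rw [Finset.sum_ite_eq' (Finset.range (n+2)) (ℓ+1) (fun m => (((ℓ : ℝ) + 1) * β) * p.coeff m)]
    rw [if_pos (Finset.mem_range.mpr (show ℓ < n+2 by omega)), if_pos (Finset.mem_range.mpr (show ℓ+1 < n+2 by omega))]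
    cases ℓ with
    | zero =>
      have h3 : ∑ m ∈ Finset.range (n+2),
          (if (0:ℕ) = m + 1 then (((n : ℝ) - m) * α) * p.coeff m else 0) = 0 := by
        apply Finset.sum_eq_zero
        intro m _
        rw [if_neg (by omega)]
      rw [h3]
      push_cast
      linear_combination rec0
    | succ t =>
      have h3 : ∑ m ∈ Finset.range (n+2),
          (if t + 1 = m + 1 then (((n : ℝ) - m) * α) * p.coeff m else 0)
          = ((n : ℝ) - t) * α * p.coeff t := by
        have : ∀ m, (t + 1 = m + 1) = (t = m) := by
          intro m; simp only [eq_iff_iff, Nat.add_right_cancel_iff]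
        simp_rw [this]
        rw [Finset.sum_ite_eq (Finset.range (n+2)) t (fun m => (((n : ℝ) - m) * α) * p.coeff m)]
        rw [if_pos (Finset.mem_range.mpr (show t < n+2 by omega))]
      rw [h3]
      push_cast
      linear_combination recS t
  -- assemble
  funext i
  have hlhs : M.mulVec u i
      = ∑ j : Fin (n+1),
        (if i.val = j.val then -((n : ℝ) - i.val) * α - (i.val : ℝ) * β
          else if j.val = i.val + 1 then ((i.val : ℝ) + 1) * β
          else if i.val = j.val + 1 then ((n : ℝ) - j.val) * α
          else 0) * p.coeff j.val := by
    rw [hM]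
    simp only [Matrix.mulVec, dotProduct, Matrix.of_apply]
    exact Finset.sum_congr rfl fun j _ => by rw [hu' j]
  have hfin : (∑ j : Fin (n+1),
        (if i.val = j.val then -((n : ℝ) - i.val) * α - (i.val : ℝ) * β
          else if j.val = i.val + 1 then ((i.val : ℝ) + 1) * β
          else if i.val = j.val + 1 then ((n : ℝ) - j.val) * α
          else 0) * p.coeff j.val)
      = ∑ m ∈ Finset.range (n+1),
        (if i.val = m then -((n : ℝ) - i.val) * α - (i.val : ℝ) * β
          else if m = i.val + 1 then ((i.val : ℝ) + 1) * β
          else if i.val = m + 1 then ((n : ℝ) - m) * α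
          else 0) * p.coeff m :=
    Fin.sum_univ_eq_sum_range (fun m =>
      (if i.val = m then -((n : ℝ) - i.val) * α - (i.val : ℝ) * β
        else if m = i.val + 1 then ((i.val : ℝ) + 1) * β
        else if i.val = m + 1 then ((n : ℝ) - m) * α
        else 0) * p.coeff m) (n+1)
  have hext : ∑ m ∈ Finset.range (n+2),
        (if i.val = m then -((n : ℝ) - i.val) * α - (i.val : ℝ) * β
          else if m = i.val + 1 then ((i.val : ℝ) + 1) * β
          else if i.val = m + 1 then ((n : ℝ) - m) * α
          else 0) * p.coeff m
      = ∑ m ∈ Finset.range (n+1),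
        (if i.val = m then -((n : ℝ) - i.val) * α - (i.val : ℝ) * β
          else if m = i.val + 1 then ((i.val : ℝ) + 1) * β
          else if i.val = m + 1 then ((n : ℝ) - m) * α
          else 0) * p.coeff m := by
    rw [Finset.sum_range_succ, hcn1, mul_zero, add_zero]
  rw [hlhs, hfin, ← hext, main i.val (by omega)]
  rw [Pi.smul_apply, smul_eq_mul, hu' i]
end

section
/- Let n ≥ 0 and let α, β be real numbers. Let M be the (n+1)×(n+1) real tridiagonal matrix with diagonal entries M_{ℓ,ℓ} = −(n−ℓ)α − ℓβ, superdiagonal entries M_{ℓ,ℓ+1} = (ℓ+1)β, and subdiagonal entries M_{ℓ+1,ℓ} = (n−ℓ)α. Then the characteristic polynomial of M is det(x·I − M) = ∏_{k=0}^{n} (x + k(α+β)). -/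
open Polynomial Matrix Finset

private lemma sum_if_eq' (m v : ℕ) (f : ℕ → ℝ) :
    (∑ k ∈ Finset.range m, if k = v then f k else 0) = if v < m then f v else 0 := by
  rw [Finset.sum_ite_eq' (Finset.range m) v f]; simp


private lemma natβ (i j : ℕ) :
    i * Nat.choose (i-1) j + j * Nat.choose i j = i * Nat.choose i j := by
  cases i with
  | zero => cases j with
    | zero => simp
    | succ j' => simp
  | succ i' =>
    cases j with
    | zero => simp
    | succ j' =>
      rw [Nat.succ_sub_one, Nat.choose_succ_succ]
      rcases le_or_gt j' i' with h | h
      · have key : Nat.choose i' (j'+1) * (j'+1) = Nat.choose i' j' * (i' - j') :=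
          Nat.choose_succ_right_eq i' j'
        have h2 : (j'+1) + (i' - j') = i' + 1 := by omega
        nlinarith [key, h2]
      · have h1 : Nat.choose i' j' = 0 := Nat.choose_eq_zero_of_lt h
        have h2 : Nat.choose i' (j'+1) = 0 := Nat.choose_eq_zero_of_lt (by omega)
        simp [h1, h2]

private lemma natα (n i j' : ℕ) (hi : i ≤ n) :
    (n-i) * Nat.choose (i+1) (j'+1) + (j'+1) * Nat.choose i (j'+1)
      = (n-i) * Nat.choose i (j'+1) + (n-j') * Nat.choose i j' := by
  rw [Nat.choose_succ_succ]
  rcases le_or_gt j' i with h | h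
  · have key : Nat.choose i (j'+1) * (j'+1) = Nat.choose i j' * (i - j') :=
      Nat.choose_succ_right_eq i j'
    have h2 : (n-i) + (i - j') = n - j' := by omega
    nlinarith [key, h2]
  · have h1 : Nat.choose i j' = 0 := Nat.choose_eq_zero_of_lt h
    have h2 : Nat.choose i (j'+1) = 0 := Nat.choose_eq_zero_of_lt (by omega)
    simp [h1, h2]



private lemma my_charpoly_transpose {m : ℕ} (A : Matrix (Fin m) (Fin m) ℝ) :
    A.transpose.charpoly = A.charpoly := by
  have h : charmatrix A.transpose = (charmatrix A).transpose := by
    ext i j : 2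
    rw [Matrix.transpose_apply]
    by_cases hij : i = j
    · subst hij; simp [charmatrix_apply_eq]
    · rw [charmatrix_apply_ne _ _ _ hij, charmatrix_apply_ne _ _ _ (Ne.symm hij),
        Matrix.transpose_apply]
  rw [Matrix.charpoly, h, Matrix.det_transpose, Matrix.charpoly]

private lemma my_charpoly_conj {m : ℕ} (A B P : Matrix (Fin m) (Fin m) ℝ)
    (hP : P.det = 1) (h : A * P = P * B) : A.charpoly = B.charpoly := by
  have key : charmatrix A * P.map C = P.map C * charmatrix B := by
    rw [charmatrix, charmatrix, sub_mul, mul_sub]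
    congr 1
    · exact (Matrix.scalar_commute (X : ℝ[X]) (fun r' => Commute.all X r') (P.map C)).eq
    · show C.mapMatrix A * C.mapMatrix P = C.mapMatrix P * C.mapMatrix B
      rw [← _root_.map_mul, ← _root_.map_mul, h]
  have hdet : (P.map C).det = 1 := by
    show (C.mapMatrix P).det = 1
    rw [← RingHom.map_det, hP, Polynomial.C_1]
  have h2 := congrArg Matrix.det key
  rw [Matrix.det_mul, Matrix.det_mul, hdet, mul_one, one_mul] at h2
  rw [Matrix.charpoly, Matrix.charpoly, h2]

open Polynomial in
/-- The characteristic polynomial of the deposition–evaporation matrix `M` is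
`∏_{k=0}^{n} (x + k(α+β))`. -/
theorem stmt_2 (n : ℕ) (α β : ℝ)
    (M : Matrix (Fin (n + 1)) (Fin (n + 1)) ℝ)
    (hM : M = Matrix.of fun i j : Fin (n + 1) =>
      if i.val = j.val then -((n : ℝ) - i.val) * α - (i.val : ℝ) * β
      else if j.val = i.val + 1 then ((i.val : ℝ) + 1) * β
      else if i.val = j.val + 1 then ((n : ℝ) - j.val) * α
      else 0) :
    M.charpoly = ∏ k ∈ Finset.range (n + 1), (X + C ((k : ℝ) * (α + β))) := by
  set P : Matrix (Fin (n+1)) (Fin (n+1)) ℝ :=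
    Matrix.of (fun i j : Fin (n+1) => ((i.val.choose j.val : ℕ) : ℝ)) with hP
  set T : Matrix (Fin (n+1)) (Fin (n+1)) ℝ :=
    Matrix.of (fun i j : Fin (n+1) =>
      if i.val = j.val then -(i.val : ℝ) * (α + β)
      else if j.val = i.val + 1 then α * ((n:ℝ) - i.val) else 0) with hT
  have hPdet : P.det = 1 := by
    have htri : P.BlockTriangular OrderDual.toDual := by
      intro i j hij
      have : (i:ℕ) < j := hij
      simp [hP, Nat.choose_eq_zero_of_lt this]
    rw [Matrix.det_of_lowerTriangular P htri]
    simp [hP]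
  have hTtri : T.BlockTriangular id := by
    intro i j hij
    have h1 : (j:ℕ) < i := hij
    simp only [hT, Matrix.of_apply]
    rw [if_neg (by omega), if_neg (by omega)]
  have hMT : M.transpose * P = P * T := by
    ext i j
    rw [Matrix.mul_apply, Matrix.mul_apply]
    set F : ℕ → ℝ := fun k =>
        ((if k = (i:ℕ) then (-((n:ℝ) - k) * α - k * β) else 0)
          + (if k = (i:ℕ) - 1 then (if (i:ℕ) = k + 1 then ((k:ℝ)+1) * β else 0) else 0)
          + (if k = (i:ℕ) + 1 then ((n:ℝ) - (i:ℕ)) * α else 0)) * ((k.choose (j:ℕ) : ℕ) : ℝ)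
      with hF
    set G : ℕ → ℝ := fun k => ((i:ℕ).choose k : ℝ) *
        ((if k = (j:ℕ) then -(k:ℝ) * (α + β) else 0)
          + (if k = (j:ℕ) - 1 then (if (j:ℕ) = k + 1 then α * ((n:ℝ) - k) else 0) else 0))
      with hG
    have hlhs : ∀ k : Fin (n+1), M.transpose i k * P k j = F (k : ℕ) := by
      intro k
      simp only [hM, hP, hF, Matrix.transpose_apply, Matrix.of_apply]
      congr 1
      split_ifs <;> first | ring1 | omega | (exfalso; omega)
    have hrhs : ∀ k : Fin (n+1), P i k * T k j = G (k : ℕ) := by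
      intro k
      simp only [hP, hT, hG, Matrix.of_apply]
      congr 1
      split_ifs <;> first | ring1 | omega | (exfalso; omega)
    rw [Finset.sum_congr rfl (fun k _ => hlhs k), Finset.sum_congr rfl (fun k _ => hrhs k),
      Fin.sum_univ_eq_sum_range F, Fin.sum_univ_eq_sum_range G, hF, hG]
    simp only [add_mul, mul_add, ite_mul, mul_ite, zero_mul, mul_zero]
    rw [Finset.sum_add_distrib, Finset.sum_add_distrib, Finset.sum_add_distrib]
    rw [sum_if_eq', sum_if_eq', sum_if_eq', sum_if_eq', sum_if_eq']
    have hi := i.isLt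
    have hj := j.isLt
    rw [if_pos (by omega : (i:ℕ) < n+1), if_pos (by omega : (i:ℕ) - 1 < n+1),
      if_pos (by omega : (j:ℕ) < n+1), if_pos (by omega : (j:ℕ) - 1 < n+1)]
    have hii : (i:ℕ) ≤ n := by omega
    have hjj : (j:ℕ) ≤ n := by omega
    have B := congrArg (Nat.cast : ℕ → ℝ) (natβ (i:ℕ) (j:ℕ))
    push_cast at B
    by_cases hj0 : (j:ℕ) = 0
    · rw [if_neg (by omega : ¬ (j:ℕ) = (j:ℕ) - 1 + 1), hj0]
      simp only [Nat.choose_zero_right, Nat.cast_zero, Nat.cast_one]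
      split_ifs with g1 g2
      · rw [Nat.cast_sub (by omega : 1 ≤ (i:ℕ)), Nat.cast_one]; ring
      · have hin : (i:ℕ) = n := by omega
        rw [Nat.cast_sub (by omega : 1 ≤ (i:ℕ)), Nat.cast_one, hin]; ring
      · have hi0 : (i:ℕ) = 0 := by omega
        rw [hi0]; push_cast; ring
      · have hi0 : (i:ℕ) = 0 := by omega
        have hn0 : n = 0 := by omega
        rw [hi0, hn0]; push_cast; ring
    · rw [if_pos (by omega : (j:ℕ) = (j:ℕ) - 1 + 1)]
      have A := congrArg (Nat.cast : ℕ → ℝ) (natα n (i:ℕ) ((j:ℕ)-1) hii)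
      rw [(by omega : (j:ℕ)-1+1 = (j:ℕ))] at A
      push_cast at A
      rw [Nat.cast_sub hii, Nat.cast_sub (by omega : (j:ℕ)-1 ≤ n)] at A
      split_ifs with g1 g2
      · rw [Nat.cast_sub (by omega : 1 ≤ (i:ℕ)), Nat.cast_one]
        linear_combination β * B + α * A
      · have hin : (i:ℕ) = n := by omega
        rw [Nat.cast_sub (by omega : 1 ≤ (i:ℕ)), Nat.cast_one]
        rw [hin] at B A ⊢
        linear_combination β * B + α * A
      · have hi0 : (i:ℕ) = 0 := by omega
        rw [hi0] at B A ⊢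
        push_cast at B A ⊢
        linear_combination β * B + α * A
      · exact absurd hjj (by omega)
  have h1 : M.charpoly = T.charpoly := by
    rw [← my_charpoly_transpose M]
    exact my_charpoly_conj M.transpose T P hPdet hMT
  rw [h1, Matrix.charpoly_of_upperTriangular T hTtri]
  rw [← Fin.prod_univ_eq_prod_range (fun k => X + C ((k : ℝ) * (α + β))) (n+1)]
  apply Finset.prod_congr rfl
  intro i _
  have hTii : T i i = -(i:ℝ) * (α+β) := by simp [hT]
  rw [hTii, show (-(i:ℝ) * (α+β)) = -((i:ℝ)*(α+β)) by ring, map_neg, sub_neg_eq_add]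
end

section
/- Let n ≥ 0 and let α, β be real numbers. Let M be the (n+1)×(n+1) real tridiagonal matrix with diagonal entries M_{ℓ,ℓ} = −(n−ℓ)α − ℓβ, superdiagonal entries M_{ℓ,ℓ+1} = (ℓ+1)β, and subdiagonal entries M_{ℓ+1,ℓ} = (n−ℓ)α. Then a real number x is an eigenvalue of M (i.e., lies in the spectrum of M over ℝ) if and only if x = −k(α+β) for some integer k with 0 ≤ k ≤ n. -/
open Matrix Finset

namespace Stmt3Aux

/-- sign-adjusted binomial entries -/
noncomputable def p (i j : ℕ) : ℝ := (-1 : ℝ) ^ (i + j) * (j.choose i)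

lemma key_choose (i j : ℕ) :
    ((i : ℝ) + 1) * (j.choose (i + 1)) = ((j : ℝ) - (i : ℝ)) * (j.choose i) := by
  rcases le_or_gt i j with h | h
  · have h1 := Nat.choose_succ_right_eq j i
    have h2 : ((j.choose (i + 1) * (i + 1) : ℕ) : ℝ) = ((j.choose i * (j - i) : ℕ) : ℝ) := by
      exact_mod_cast congrArg (fun t : ℕ => (t : ℝ)) h1
    push_cast [Nat.cast_sub h] at h2
    linarith
  · rw [Nat.choose_eq_zero_of_lt h, Nat.choose_eq_zero_of_lt (by omega)]
    simp

noncomputable def Md (n : ℕ) (α β : ℝ) : Matrix (Fin (n + 1)) (Fin (n + 1)) ℝ :=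
  Matrix.of fun i j : Fin (n + 1) =>
    if i.val = j.val then -((n : ℝ) - i.val) * α - (i.val : ℝ) * β
    else if j.val = i.val + 1 then ((i.val : ℝ) + 1) * β
    else if i.val = j.val + 1 then ((n : ℝ) - j.val) * α
    else 0

noncomputable def Pm (n : ℕ) : Matrix (Fin (n + 1)) (Fin (n + 1)) ℝ :=
  Matrix.of fun i j : Fin (n + 1) => p i.val j.val

noncomputable def Tm (n : ℕ) (α β : ℝ) : Matrix (Fin (n + 1)) (Fin (n + 1)) ℝ :=
  Matrix.of fun i j : Fin (n + 1) =>
    if i.val = j.val then -(j.val : ℝ) * (α + β)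
    else if i.val = j.val + 1 then ((n : ℝ) - j.val) * α
    else 0

lemma mulPT (n : ℕ) (α β : ℝ) : Md n α β * Pm n = Pm n * Tm n α β := by
  ext i j
  rw [Matrix.mul_apply, Matrix.mul_apply]
  have hL : ∑ k : Fin (n + 1), Md n α β i k * Pm n k j
      = ∑ k ∈ Finset.range (n + 1),
          (if i.val = k then -((n : ℝ) - i.val) * α - (i.val : ℝ) * β
            else if k = i.val + 1 then ((i.val : ℝ) + 1) * β
            else if i.val = k + 1 then ((n : ℝ) - k) * α
            else 0) * p k j.val := by
    rw [← Fin.sum_univ_eq_sum_range (fun k =>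
      (if i.val = k then -((n : ℝ) - i.val) * α - (i.val : ℝ) * β
        else if k = i.val + 1 then ((i.val : ℝ) + 1) * β
        else if i.val = k + 1 then ((n : ℝ) - k) * α
        else 0) * p k j.val) (n + 1)]
    rfl
  have hR : ∑ k : Fin (n + 1), Pm n i k * Tm n α β k j
      = ∑ k ∈ Finset.range (n + 1),
          p i.val k * (if k = j.val then -(j.val : ℝ) * (α + β)
            else if k = j.val + 1 then ((n : ℝ) - j.val) * α
            else 0) := by
    rw [← Fin.sum_univ_eq_sum_range (fun k =>
      p i.val k * (if k = j.val then -(j.val : ℝ) * (α + β)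
        else if k = j.val + 1 then ((n : ℝ) - j.val) * α
        else 0)) (n + 1)]
    rfl
  rw [hL, hR]
  -- split the left sum into three pieces
  have hsplit : ∀ k ∈ Finset.range (n + 1),
      (if i.val = k then -((n : ℝ) - i.val) * α - (i.val : ℝ) * β
        else if k = i.val + 1 then ((i.val : ℝ) + 1) * β
        else if i.val = k + 1 then ((n : ℝ) - k) * α
        else 0) * p k j.val
      = (if i.val = k then (-((n : ℝ) - i.val) * α - (i.val : ℝ) * β) * p k j.val else 0)
        + (if k = i.val + 1 then ((i.val : ℝ) + 1) * β * p k j.val else 0)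
        + (if i.val = k + 1 then ((n : ℝ) - k) * α * p k j.val else 0) := by
    intro k _
    split_ifs <;> first | ring1 | (exfalso; omega)
  rw [Finset.sum_congr rfl hsplit, Finset.sum_add_distrib, Finset.sum_add_distrib]
  have hrsplit : ∀ k ∈ Finset.range (n + 1),
      p i.val k * (if k = j.val then -(j.val : ℝ) * (α + β)
        else if k = j.val + 1 then ((n : ℝ) - j.val) * α
        else 0)
      = (if k = j.val then p i.val k * (-(j.val : ℝ) * (α + β)) else 0)
        + (if k = j.val + 1 then p i.val k * (((n : ℝ) - j.val) * α) else 0) := by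
    intro k _
    split_ifs <;> first | ring1 | (exfalso; omega)
  rw [Finset.sum_congr rfl hrsplit, Finset.sum_add_distrib]
  have e1 : ∑ k ∈ Finset.range (n + 1),
      (if i.val = k then (-((n : ℝ) - i.val) * α - (i.val : ℝ) * β) * p k j.val else 0)
      = (-((n : ℝ) - i.val) * α - (i.val : ℝ) * β) * p i.val j.val := by
    rw [Finset.sum_ite_eq]
    simp [Finset.mem_range, i.isLt]
  have e2 : ∑ k ∈ Finset.range (n + 1),
      (if k = i.val + 1 then ((i.val : ℝ) + 1) * β * p k j.val else 0)
      = ((i.val : ℝ) + 1) * β * p (i.val + 1) j.val := by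
    rw [Finset.sum_ite_eq']
    split_ifs with h
    · rfl
    · have hj : j.val < i.val + 1 := by
        have hi := i.isLt; have hjn := j.isLt
        simp [Finset.mem_range] at h
        omega
      simp [p, Nat.choose_eq_zero_of_lt hj]
  have e4 : ∑ k ∈ Finset.range (n + 1),
      (if k = j.val then p i.val k * (-(j.val : ℝ) * (α + β)) else 0)
      = p i.val j.val * (-(j.val : ℝ) * (α + β)) := by
    rw [Finset.sum_ite_eq']
    simp [Finset.mem_range, j.isLt]
  have e5 : ∑ k ∈ Finset.range (n + 1),
      (if k = j.val + 1 then p i.val k * (((n : ℝ) - j.val) * α) else 0)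
      = p i.val (j.val + 1) * (((n : ℝ) - j.val) * α) := by
    rw [Finset.sum_ite_eq']
    split_ifs with h
    · rfl
    · have hjn : j.val = n := by
        have hj := j.isLt
        simp [Finset.mem_range] at h
        omega
      rw [hjn]
      simp
  rw [e1, e2, e4, e5]
  -- now handle the subdiagonal sum, case splitting on i
  rcases Nat.eq_zero_or_pos i.val with hi0 | hipos
  · have e3 : ∑ k ∈ Finset.range (n + 1),
        (if i.val = k + 1 then ((n : ℝ) - k) * α * p k j.val else 0) = 0 := by
      apply Finset.sum_eq_zero
      intro k _
      rw [if_neg (by omega)]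
    rw [e3, hi0]
    have hc0 : ∀ m : ℕ, m.choose 0 = 1 := fun m => Nat.choose_zero_right m
    simp only [p, Nat.cast_zero, Nat.choose_zero_right, Nat.choose_one_right,
      Nat.cast_one, zero_add]
    ring
  · obtain ⟨m, him⟩ : ∃ m, i.val = m + 1 := ⟨i.val - 1, by omega⟩
    have hmn : m + 1 ≤ n := by have := i.isLt; omega
    have e3 : ∑ k ∈ Finset.range (n + 1),
        (if i.val = k + 1 then ((n : ℝ) - k) * α * p k j.val else 0)
        = ((n : ℝ) - m) * α * p m j.val := by
      have : ∀ k ∈ Finset.range (n + 1),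
          (if i.val = k + 1 then ((n : ℝ) - k) * α * p k j.val else 0)
          = (if k = m then ((n : ℝ) - k) * α * p k j.val else 0) := by
        intro k _
        have : (i.val = k + 1) ↔ (k = m) := by omega
        simp only [this]
      rw [Finset.sum_congr rfl this, Finset.sum_ite_eq']
      rw [if_pos (by simp [Finset.mem_range]; omega)]
    rw [e3, him]
    -- now a scalar identity in m, j.val, n, α, β
    set J := j.val with hJ
    have h1 := key_choose (m + 1) J
    have h2 := key_choose m J
    have h3 : ((J + 1).choose (m + 1) : ℝ) = (J.choose m : ℝ) + (J.choose (m + 1) : ℝ) := by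
      rw [Nat.choose_succ_succ]
      push_cast
      ring
    simp only [p]
    push_cast at h1 h2 ⊢
    have s1 : (-1 : ℝ) ^ (m + 1 + J) = -((-1 : ℝ) ^ (m + J)) := by
      rw [show m + 1 + J = (m + J) + 1 by omega, pow_succ]; ring
    have s2 : (-1 : ℝ) ^ (m + 1 + 1 + J) = (-1 : ℝ) ^ (m + J) := by
      rw [show m + 1 + 1 + J = (m + J) + 2 by omega, pow_add]; norm_num
    have s3 : (-1 : ℝ) ^ (m + 1 + (J + 1)) = (-1 : ℝ) ^ (m + J) := by
      rw [show m + 1 + (J + 1) = (m + J) + 2 by omega, pow_add]; norm_num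
    rw [s1, s2, s3]
    linear_combination ((-1 : ℝ) ^ (m + J)) *
      (β * h1 - α * h2 - ((n : ℝ) - J) * α * h3)

lemma detPm (n : ℕ) : (Pm n).det = 1 := by
  rw [Matrix.det_of_upperTriangular (M := Pm n)]
  · have : ∀ i : Fin (n + 1), Pm n i i = 1 := by
      intro i
      simp only [Pm, Matrix.of_apply, p, Nat.choose_self, Nat.cast_one, mul_one]
      rw [← two_mul, pow_mul]
      norm_num
    simp [this]
  · intro i j hij
    have : j.val < i.val := hij
    simp only [Pm, Matrix.of_apply, p, Nat.choose_eq_zero_of_lt this]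
    simp

lemma spec_iff (n : ℕ) (α β : ℝ) (x : ℝ) :
    x ∈ spectrum ℝ (Md n α β) ↔ ∃ k : ℕ, k ≤ n ∧ x = -(k : ℝ) * (α + β) := by
  rw [spectrum.mem_iff]
  rw [Algebra.algebraMap_eq_smul_one]
  rw [Matrix.isUnit_iff_isUnit_det]
  rw [isUnit_iff_ne_zero, not_not]
  have hdet : (x • (1 : Matrix (Fin (n + 1)) (Fin (n + 1)) ℝ) - Md n α β).det
      = (x • (1 : Matrix (Fin (n + 1)) (Fin (n + 1)) ℝ) - Tm n α β).det := by
    have hconj : (x • (1 : Matrix (Fin (n + 1)) (Fin (n + 1)) ℝ) - Md n α β) * Pm n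
        = Pm n * (x • (1 : Matrix (Fin (n + 1)) (Fin (n + 1)) ℝ) - Tm n α β) := by
      rw [sub_mul, mul_sub, mulPT, Matrix.smul_mul, Matrix.mul_smul,
        Matrix.one_mul, Matrix.mul_one]
    have := congrArg Matrix.det hconj
    rw [Matrix.det_mul, Matrix.det_mul, detPm, mul_one, one_mul] at this
    exact this
  rw [hdet]
  have hT : (x • (1 : Matrix (Fin (n + 1)) (Fin (n + 1)) ℝ) - Tm n α β).det
      = ∏ k : Fin (n + 1), (x + (k.val : ℝ) * (α + β)) := by
    rw [Matrix.det_of_lowerTriangular]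
    · apply Finset.prod_congr rfl
      intro k _
      simp [Tm, Matrix.one_apply, Matrix.smul_apply]
      try ring
    · intro i j hij
      have h1 : i.val < j.val := hij
      simp only [Matrix.sub_apply, Matrix.smul_apply, Matrix.one_apply, Tm, Matrix.of_apply]
      rw [if_neg (by omega), if_neg (by omega), if_neg (by omega)]
      simp
  rw [hT, Finset.prod_eq_zero_iff]
  constructor
  · rintro ⟨k, -, hk⟩
    exact ⟨k.val, by omega, by linarith⟩
  · rintro ⟨k, hkn, rfl⟩
    refine ⟨⟨k, by omega⟩, Finset.mem_univ _, ?_⟩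
    simp
    try ring

end Stmt3Aux

/-- A real number `x` is an eigenvalue of the deposition–evaporation matrix `M`
iff `x = -k(α+β)` for some `0 ≤ k ≤ n`. -/
theorem stmt_3 (n : ℕ) (α β : ℝ)
    (M : Matrix (Fin (n + 1)) (Fin (n + 1)) ℝ)
    (hM : M = Matrix.of fun i j : Fin (n + 1) =>
      if i.val = j.val then -((n : ℝ) - i.val) * α - (i.val : ℝ) * β
      else if j.val = i.val + 1 then ((i.val : ℝ) + 1) * β
      else if i.val = j.val + 1 then ((n : ℝ) - j.val) * α
      else 0)
    (x : ℝ) :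
    x ∈ spectrum ℝ M ↔ ∃ k : ℕ, k ≤ n ∧ x = -(k : ℝ) * (α + β) := by
  subst hM
  exact Stmt3Aux.spec_iff n α β x
end

section
/- Let n ≥ 0 and let α, β be real numbers with α ≠ 0 and α + β ≠ 0. Let M be the (n+1)×(n+1) real tridiagonal matrix with diagonal entries M_{ℓ,ℓ} = −(n−ℓ)α − ℓβ, superdiagonal entries M_{ℓ,ℓ+1} = (ℓ+1)β, and subdiagonal entries M_{ℓ+1,ℓ} = (n−ℓ)α. Then M is diagonalizable over ℝ: there exist an invertible (n+1)×(n+1) real matrix P and the diagonal matrix D with diagonal entries (0, −(α+β), −2(α+β), …, −n(α+β)) such that M = P · D · P⁻¹. -/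
lemma sum_deltaN {N : ℕ} (t : ℕ) (g : Fin N → ℝ) :
    ∑ j : Fin N, (if (j : ℕ) = t then g j else 0) =
      if h : t < N then g ⟨t, h⟩ else 0 := by
  by_cases h : t < N
  · rw [dif_pos h]
    rw [Finset.sum_eq_single_of_mem ⟨t, h⟩ (Finset.mem_univ _)]
    · simp
    · intro b _ hb
      exact if_neg (fun hv => hb (Fin.ext hv))
  · rw [dif_neg h]
    exact Finset.sum_eq_zero fun j _ => if_neg (by have := j.isLt; omega)

lemma cast_choose_mul (k i : ℕ) :
    ((k.choose (i+1)) : ℝ) * (i+1) = (k.choose i : ℝ) * ((k:ℝ) - i) := by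
  rcases le_or_gt (i+1) k with h | h
  · have h1 : ((k.choose (i+1) * (i+1) : ℕ) : ℝ) = ((k.choose i * (k - i) : ℕ) : ℝ) := by
      exact_mod_cast congrArg (Nat.cast (R := ℝ)) (Nat.choose_succ_right_eq k i)
    have h2 : ((k - i : ℕ) : ℝ) = (k:ℝ) - i := by
      rw [Nat.cast_sub (by omega)]
    push_cast at h1
    rw [h2] at h1
    linarith [h1]
  · rcases eq_or_lt_of_le (Nat.lt_succ_iff.mp h) with h' | h'
    · rw [← h']
      simp [Nat.choose_eq_zero_of_lt (Nat.lt_succ_self k)]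
    · simp [Nat.choose_eq_zero_of_lt h', Nat.choose_eq_zero_of_lt (by omega : k < i + 1)]

lemma keyA (n i k : ℕ) (α β : ℝ) :
    (-((n:ℝ) - i) * α - (i:ℝ)*β) * ((-1:ℝ)^(i+k) * (k.choose i : ℝ))
  + ((i:ℝ)+1)*β * ((-1:ℝ)^((i+1)+k) * (k.choose (i+1) : ℝ))
  + (if i = 0 then 0 else
      ((n:ℝ) - ((i-1 : ℕ):ℝ)) * α * ((-1:ℝ)^((i-1)+k)*(k.choose (i-1):ℝ)))
  = ((-1:ℝ)^(i+k) * (k.choose i:ℝ)) * (-(k:ℝ)*(α+β))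
  + ((-1:ℝ)^(i+(k+1)) * ((k+1).choose i : ℝ)) * (((n:ℝ)-(k:ℝ))*α) := by
  rcases i with _ | i'
  · simp only [if_pos rfl, Nat.cast_zero, Nat.choose_zero_right, Nat.cast_one,
      Nat.choose_one_right, zero_add, pow_add, pow_succ, pow_zero]
    push_cast
    ring
  · rw [if_neg (Nat.succ_ne_zero i')]
    simp only [Nat.succ_sub_one, Nat.add_eq, Nat.succ_eq_add_one]
    have h1 := cast_choose_mul k i'
    have h2 := cast_choose_mul k (i'+1)
    have hp : (((k+1).choose (i'+1)) : ℝ) = (k.choose i' : ℝ) + (k.choose (i'+1) : ℝ) := by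
      exact_mod_cast congrArg (Nat.cast (R := ℝ)) (Nat.choose_succ_succ k i')
    rw [hp]
    simp only [pow_add, pow_succ, pow_zero]
    push_cast
    push_cast at h1 h2
    linear_combination ((-1:ℝ)^i' * (-1)^k) * β * h2 - ((-1:ℝ)^i' * (-1)^k) * α * h1

noncomputable def Rent (n : ℕ) (α β : ℝ) (j m : ℕ) : ℝ :=
  if m ≤ j then (((n - m).choose (j - m)) : ℝ) * α^(j - m) * (α+β)^(n - j) else 0

lemma Rent_zero (n : ℕ) (α β : ℝ) {j m : ℕ} (h : j < m) : Rent n α β j m = 0 := by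
  rw [Rent, if_neg (by omega)]

lemma keyB (n j m : ℕ) (hj : j ≤ n) (α β : ℝ) :
    -(j:ℝ)*(α+β) * Rent n α β j m
  + (if j = 0 then 0 else ((n:ℝ) - ((j-1:ℕ):ℝ)) * α * Rent n α β (j-1) m)
  = Rent n α β j m * (-(m:ℝ)*(α+β)) := by
  rcases j with _ | j'
  · rw [if_pos rfl]
    rcases Nat.eq_zero_or_pos m with hm | hm
    · subst hm; push_cast; ring
    · rw [Rent_zero n α β hm]; push_cast; ring
  · rw [if_neg (Nat.succ_ne_zero j'), Nat.succ_sub_one]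
    rcases Nat.lt_trichotomy (j'+1) m with hlt | heq | hgt
    · rw [Rent_zero n α β hlt, Rent_zero n α β (by omega : j' < m)]; ring
    · rw [Rent_zero n α β (by omega : j' < m), ← heq]
      push_cast; ring
    · have hm : m ≤ j' := by omega
      rw [Rent, if_pos (by omega), Rent, if_pos hm]
      have hs1 : j' + 1 - m = (j' - m) + 1 := by omega
      have hs2 : n - j' = (n - (j'+1)) + 1 := by omega
      have hc := cast_choose_mul (n - m) (j' - m)
      have hcast1 : ((n - m : ℕ) : ℝ) = (n:ℝ) - m := by rw [Nat.cast_sub (by omega)]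
      have hcast2 : ((j' - m : ℕ) : ℝ) = (j':ℝ) - m := by rw [Nat.cast_sub hm]
      rw [hcast1, hcast2] at hc
      rw [hs1, hs2, pow_succ, pow_succ]
      push_cast
      linear_combination (-(α^(j'-m) * α * (α+β)^(n-(j'+1)) * (α+β))) * hc

def Smat (n : ℕ) : Matrix (Fin (n+1)) (Fin (n+1)) ℝ :=
  Matrix.of fun i j => (-1:ℝ)^(i.val + j.val) * ((j.val.choose i.val : ℕ) : ℝ)

def Nmat (n : ℕ) (α β : ℝ) : Matrix (Fin (n+1)) (Fin (n+1)) ℝ :=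
  Matrix.of fun j k => if j.val = k.val then -(k.val:ℝ)*(α+β)
    else if j.val = k.val + 1 then ((n:ℝ) - (k.val:ℝ))*α else 0

noncomputable def Rmat (n : ℕ) (α β : ℝ) : Matrix (Fin (n+1)) (Fin (n+1)) ℝ :=
  Matrix.of fun j k => Rent n α β j.val k.val

lemma lemA (n : ℕ) (α β : ℝ) :
    (Matrix.of fun i j : Fin (n + 1) =>
      if i.val = j.val then -((n : ℝ) - i.val) * α - (i.val : ℝ) * β
      else if j.val = i.val + 1 then ((i.val : ℝ) + 1) * β
      else if i.val = j.val + 1 then ((n : ℝ) - j.val) * α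
      else 0) * Smat n = Smat n * Nmat n α β := by
  ext i k
  rw [Matrix.mul_apply, Matrix.mul_apply]
  have hL : ∀ j : Fin (n+1), (Matrix.of fun i j : Fin (n + 1) =>
      if i.val = j.val then -((n : ℝ) - i.val) * α - (i.val : ℝ) * β
      else if j.val = i.val + 1 then ((i.val : ℝ) + 1) * β
      else if i.val = j.val + 1 then ((n : ℝ) - j.val) * α
      else 0) i j * Smat n j k =
      (if (j:ℕ) = i.val then (-((n:ℝ) - i.val) * α - (i.val:ℝ)*β) * Smat n j k else 0)
    + (if (j:ℕ) = i.val + 1 then ((i.val:ℝ)+1)*β * Smat n j k else 0)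
    + (if (j:ℕ) = i.val - 1 then
        (if i.val = 0 then 0 else ((n:ℝ) - ((j:ℕ):ℝ)) * α * Smat n j k) else 0) := by
    intro j
    simp only [Matrix.of_apply]
    split_ifs <;> (first | ring1 | omega)
  rw [Finset.sum_congr rfl fun j _ => hL j, Finset.sum_add_distrib,
    Finset.sum_add_distrib, sum_deltaN, sum_deltaN, sum_deltaN]
  have hR : ∀ j : Fin (n+1), Smat n i j * Nmat n α β j k =
      (if (j:ℕ) = k.val then Smat n i j * (-(k.val:ℝ)*(α+β)) else 0)
    + (if (j:ℕ) = k.val + 1 then Smat n i j * (((n:ℝ) - (k.val:ℝ))*α) else 0) := by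
    intro j
    simp only [Matrix.of_apply, Nmat]
    split_ifs <;> (first | ring1 | omega)
  rw [Finset.sum_congr rfl fun j _ => hR j, Finset.sum_add_distrib, sum_deltaN, sum_deltaN]
  rw [dif_pos i.isLt, dif_pos (show i.val - 1 < n+1 by omega), dif_pos k.isLt]
  have e2 : (if h : i.val + 1 < n + 1 then
        ((i.val:ℝ)+1)*β * Smat n ⟨i.val+1, h⟩ k else 0)
      = ((i.val:ℝ)+1)*β * ((-1:ℝ)^((i.val+1)+k.val) * (k.val.choose (i.val+1) : ℝ)) := by
    by_cases h : i.val + 1 < n + 1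
    · rw [dif_pos h]; simp [Smat]
    · rw [dif_neg h,
        Nat.choose_eq_zero_of_lt (show k.val < i.val + 1 by have := k.isLt; omega)]
      simp
  have e5 : (if h : k.val + 1 < n + 1 then
        Smat n i ⟨k.val+1, h⟩ * (((n:ℝ) - (k.val:ℝ))*α) else 0)
      = ((-1:ℝ)^(i.val+(k.val+1)) * ((k.val+1).choose i.val : ℝ)) * (((n:ℝ)-(k.val:ℝ))*α) := by
    by_cases h : k.val + 1 < n + 1
    · rw [dif_pos h]; simp [Smat]
    · rw [dif_neg h]
      have : ((n:ℝ) - (k.val:ℝ)) = 0 := by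
        have : k.val = n := by have := k.isLt; omega
        rw [this]; ring
      rw [this]; ring
  rw [e2, e5]
  simp only [Smat, Matrix.of_apply]
  exact keyA n i.val k.val α β

lemma lemB (n : ℕ) (α β : ℝ) :
    Nmat n α β * Rmat n α β
      = Rmat n α β * Matrix.diagonal (fun k : Fin (n+1) => -(k.val:ℝ)*(α+β)) := by
  ext j m
  rw [Matrix.mul_apply, Matrix.mul_diagonal]
  have hL : ∀ k : Fin (n+1), Nmat n α β j k * Rmat n α β k m =
      (if (k:ℕ) = j.val then -(((k:ℕ):ℝ))*(α+β) * Rmat n α β k m else 0)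
    + (if (k:ℕ) = j.val - 1 then
        (if j.val = 0 then 0 else ((n:ℝ) - ((k:ℕ):ℝ)) * α * Rmat n α β k m) else 0) := by
    intro k
    simp only [Nmat, Matrix.of_apply]
    split_ifs <;> (first | ring1 | omega)
  rw [Finset.sum_congr rfl fun k _ => hL k, Finset.sum_add_distrib, sum_deltaN, sum_deltaN]
  rw [dif_pos j.isLt, dif_pos (show j.val - 1 < n+1 by omega)]
  simp only [Rmat, Matrix.of_apply]
  exact keyB n j.val m.val (by have := j.isLt; omega) α β

lemma Sdet (n : ℕ) : (Smat n).det = 1 := by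
  rw [Matrix.det_of_upperTriangular (M := Smat n)]
  · apply Finset.prod_eq_one
    intro i _
    simp [Smat, Even.neg_one_pow ⟨i.val, rfl⟩]
  · intro i j hij
    simp [Smat, Nat.choose_eq_zero_of_lt (show (j:ℕ) < (i:ℕ) from hij)]

lemma Rdet (n : ℕ) (α β : ℝ) (hαβ : α + β ≠ 0) : (Rmat n α β).det ≠ 0 := by
  rw [Matrix.det_of_lowerTriangular (Rmat n α β)]
  · apply Finset.prod_ne_zero_iff.mpr
    intro i _
    have : Rmat n α β i i = (α+β)^(n - i.val) := by
      simp [Rmat, Rent]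
    rw [this]
    exact pow_ne_zero _ hαβ
  · intro i j hij
    exact Rent_zero n α β (show (i:ℕ) < (j:ℕ) from hij)

/-- The deposition–evaporation matrix `M` is diagonalizable over `ℝ`, with
diagonal form `diag(0, -(α+β), -2(α+β), …, -n(α+β))`. -/
theorem stmt_4 (n : ℕ) (α β : ℝ) (hα : α ≠ 0) (hαβ : α + β ≠ 0)
    (M : Matrix (Fin (n + 1)) (Fin (n + 1)) ℝ)
    (hM : M = Matrix.of fun i j : Fin (n + 1) =>
      if i.val = j.val then -((n : ℝ) - i.val) * α - (i.val : ℝ) * β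
      else if j.val = i.val + 1 then ((i.val : ℝ) + 1) * β
      else if i.val = j.val + 1 then ((n : ℝ) - j.val) * α
      else 0)
    (D : Matrix (Fin (n + 1)) (Fin (n + 1)) ℝ)
    (hD : D = Matrix.diagonal fun k : Fin (n + 1) => -(k.val : ℝ) * (α + β)) :
    ∃ P : Matrix (Fin (n + 1)) (Fin (n + 1)) ℝ, IsUnit P.det ∧ M = P * D * P⁻¹ := by
  subst hM; subst hD
  refine ⟨Smat n * Rmat n α β, ?_, ?_⟩
  · apply isUnit_iff_ne_zero.mpr
    rw [Matrix.det_mul, Sdet, one_mul]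
    exact Rdet n α β hαβ
  · have hP : IsUnit (Smat n * Rmat n α β).det := by
      apply isUnit_iff_ne_zero.mpr
      rw [Matrix.det_mul, Sdet, one_mul]
      exact Rdet n α β hαβ
    have hMP : (Matrix.of fun i j : Fin (n + 1) =>
        if i.val = j.val then -((n : ℝ) - i.val) * α - (i.val : ℝ) * β
        else if j.val = i.val + 1 then ((i.val : ℝ) + 1) * β
        else if i.val = j.val + 1 then ((n : ℝ) - j.val) * α
        else 0) * (Smat n * Rmat n α β)
        = (Smat n * Rmat n α β) * Matrix.diagonal (fun k : Fin (n+1) => -(k.val:ℝ)*(α+β)) := by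
      rw [← mul_assoc, lemA n α β, mul_assoc, lemB n α β, ← mul_assoc]
    rw [← hMP, mul_assoc, Matrix.mul_nonsing_inv _ hP, mul_one]
end

section
/- Let n ≥ 1 and let α, β be real numbers with α ≠ 0, and set η = β/α. For 0 ≤ k ≤ n and 0 ≤ ℓ ≤ n, define u_{k,ℓ} = Σ_{j=max(0,ℓ−k)}^{min(ℓ,n−k)} (−1)^{k+ℓ+j} η^{n−k−j} C(k, ℓ−j) C(n−k, j). Then for every k with 0 ≤ k ≤ n and every ℓ with 1 ≤ ℓ ≤ n−1, the three-term identity (n−ℓ+1)·u_{k,ℓ−1} + (k+ℓ−n + (k−ℓ)η)·u_{k,ℓ} + (ℓ+1)·η·u_{k,ℓ+1} = 0 holds. -/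
/-!
The row `ℓ ↦ u_{k,ℓ}` is the coefficient sequence of `f = (X + η)^(n-k) (X - 1)^k`, and `f` solves
the first-order equation `(X + η)(X - 1) f' = ((n - k)(X - 1) + k (X + η)) f`, as does every product
of powers of two linear factors. Comparing the coefficients of `X^ℓ` on both sides of that equation
is exactly the three-term identity.
-/

open Polynomial

namespace Polynomial

variable {R : Type*} [CommRing R]

theorem coeff_X_mul_derivative (p : R[X]) (m : ℕ) :
    (X * derivative p).coeff m = m * p.coeff m := by
  cases m with
  | zero => simp
  | succ m => rw [coeff_X_mul, coeff_derivative]; push_cast; ring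

theorem X_add_C_mul_derivative_X_add_C_pow (a : R) (m : ℕ) :
    (X + C a) * derivative ((X + C a) ^ m) = C (m : R) * (X + C a) ^ m := by
  cases m with
  | zero => simp
  | succ m => rw [derivative_X_add_C_pow, pow_succ]; push_cast; ring

theorem X_add_C_mul_X_add_C_mul_derivative_pow_mul_pow (a b : R) (m k : ℕ) :
    (X + C a) * (X + C b) * derivative ((X + C a) ^ m * (X + C b) ^ k) =
      (C (m : R) * (X + C b) + C (k : R) * (X + C a)) * ((X + C a) ^ m * (X + C b) ^ k) := by
  have hm := X_add_C_mul_derivative_X_add_C_pow a m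
  have hk := X_add_C_mul_derivative_X_add_C_pow b k
  rw [derivative_mul]
  linear_combination (X + C b) * (X + C b) ^ k * hm + (X + C a) * (X + C a) ^ m * hk

theorem coeff_X_add_C_pow_mul_X_sub_one_pow (η : R) (n k ℓ : ℕ) :
    ((X + C η) ^ (n - k) * (X - 1) ^ k).coeff ℓ =
      ∑ j ∈ Finset.Icc (ℓ - k) (min ℓ (n - k)),
        (-1 : R) ^ (k + ℓ + j) * η ^ (n - k - j) * (k.choose (ℓ - j) : R) * ((n - k).choose j : R) := by
  rw [coeff_mul, Finset.Nat.sum_antidiagonal_eq_sum_range_succ_mk, sub_eq_add_neg, ← C_1, ← C_neg]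
  refine (Finset.sum_subset_zero_on_sdiff ?_ ?_ ?_).symm
  · intro j hj
    simp only [Finset.mem_Icc, Finset.mem_range] at hj ⊢
    omega
  · intro j hj
    simp only [Finset.mem_sdiff, Finset.mem_Icc, Finset.mem_range] at hj
    rw [coeff_X_add_C_pow, coeff_X_add_C_pow]
    rcases le_or_gt j (n - k) with hj' | hj'
    · rw [Nat.choose_eq_zero_of_lt (show k < ℓ - j by omega)]; simp
    · rw [Nat.choose_eq_zero_of_lt hj']; simp
  · intro j hj
    simp only [Finset.mem_Icc] at hj
    rw [coeff_X_add_C_pow, coeff_X_add_C_pow,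
      show k + ℓ + j = k - (ℓ - j) + 2 * ℓ by omega, pow_add, pow_mul, neg_one_sq, one_pow]
    ring

theorem coeff_recurrence_of_X_add_C_mul_X_sub_one_mul_derivative_eq {f : R[X]} {η a b : R}
    (h : (X + C η) * (X - 1) * derivative f = (C a * (X - 1) + C b * (X + C η)) * f) (m : ℕ) :
    (a + b - m) * f.coeff m + (m + 1 - a + (b - m - 1) * η) * f.coeff (m + 1) +
      (m + 2) * η * f.coeff (m + 2) = 0 := by
  have hl : (X + C η) * (X - 1) * derivative f =
      X * (X * derivative f) + C (η - 1) * (X * derivative f) + C (-η) * derivative f := by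
    simp only [map_sub, map_neg, map_one]; ring
  have hr : (C a * (X - 1) + C b * (X + C η)) * f = C (a + b) * (X * f) + C (b * η - a) * f := by
    simp only [map_sub, map_add, map_mul]; ring
  have hcoeff := congrArg (coeff · (m + 1)) (hl.symm.trans (h.trans hr))
  simp only [coeff_add, coeff_C_mul, coeff_X_mul_derivative, coeff_X_mul, coeff_derivative] at hcoeff
  push_cast at hcoeff
  linear_combination -hcoeff

end Polynomial

theorem stmt_5_general (n : ℕ) (η : ℝ)
    (u : ℕ → ℕ → ℝ)
    (hu : u = fun k ℓ =>
      ∑ j ∈ Finset.Icc (ℓ - k) (min ℓ (n - k)),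
        (-1 : ℝ) ^ (k + ℓ + j) * η ^ (n - k - j) *
          (Nat.choose k (ℓ - j) : ℝ) * (Nat.choose (n - k) j : ℝ))
    (k : ℕ) (hk : k ≤ n) (ℓ : ℕ) (hℓ1 : 1 ≤ ℓ) :
    ((n : ℝ) - ℓ + 1) * u k (ℓ - 1) +
      ((k : ℝ) + ℓ - n + ((k : ℝ) - ℓ) * η) * u k ℓ +
      ((ℓ : ℝ) + 1) * η * u k (ℓ + 1) = 0 := by
  obtain ⟨m, rfl⟩ : ∃ m, ℓ = m + 1 := ⟨ℓ - 1, by omega⟩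
  have hode := X_add_C_mul_X_add_C_mul_derivative_pow_mul_pow η (-1) (n - k) k
  simp only [map_neg, map_one, ← sub_eq_add_neg] at hode
  have hrec := coeff_recurrence_of_X_add_C_mul_X_sub_one_mul_derivative_eq hode m
  have hcoeff : ∀ i, u k i = ((X + C η) ^ (n - k) * (X - 1) ^ k).coeff i := fun i => by
    rw [hu, coeff_X_add_C_pow_mul_X_sub_one_pow]
  rw [Nat.cast_sub hk] at hrec
  simp only [hcoeff, Nat.add_sub_cancel]
  push_cast
  linear_combination hrec

/-- Interior-row three-term identity for the eigenvector components `u_{k,ℓ}`. -/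
theorem stmt_5 (n : ℕ) (hn : 1 ≤ n) (α β : ℝ) (hα : α ≠ 0) (η : ℝ) (hη : η = β / α)
    (u : ℕ → ℕ → ℝ)
    (hu : u = fun k ℓ =>
      ∑ j ∈ Finset.Icc (ℓ - k) (min ℓ (n - k)),
        (-1 : ℝ) ^ (k + ℓ + j) * η ^ (n - k - j) *
          (Nat.choose k (ℓ - j) : ℝ) * (Nat.choose (n - k) j : ℝ))
    (k : ℕ) (hk : k ≤ n) (ℓ : ℕ) (hℓ1 : 1 ≤ ℓ) (hℓ2 : ℓ ≤ n - 1) :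
    ((n : ℝ) - ℓ + 1) * u k (ℓ - 1) +
      ((k : ℝ) + ℓ - n + ((k : ℝ) - ℓ) * η) * u k ℓ +
      ((ℓ : ℝ) + 1) * η * u k (ℓ + 1) = 0 :=
  stmt_5_general n η u hu k hk ℓ hℓ1
end

section
/- Let n ≥ 1 and let α, β be real numbers with α ≠ 0, and set η = β/α. For 0 ≤ k ≤ n and 0 ≤ ℓ ≤ n, define u_{k,ℓ} = Σ_{j=max(0,ℓ−k)}^{min(ℓ,n−k)} (−1)^{k+ℓ+j} η^{n−k−j} C(k, ℓ−j) C(n−k, j). Then for every k with 0 ≤ k ≤ n, the first-row identity (−n + k + kη)·u_{k,0} + η·u_{k,1} = 0 holds. -/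
/-- First-row identity for the eigenvector components `u_{k,ℓ}`. -/
theorem stmt_6 (n : ℕ) (hn : 1 ≤ n) (α β : ℝ) (hα : α ≠ 0) (η : ℝ) (hη : η = β / α)
    (u : ℕ → ℕ → ℝ)
    (hu : u = fun k ℓ =>
      ∑ j ∈ Finset.Icc (ℓ - k) (min ℓ (n - k)),
        (-1 : ℝ) ^ (k + ℓ + j) * η ^ (n - k - j) *
          (Nat.choose k (ℓ - j) : ℝ) * (Nat.choose (n - k) j : ℝ))
    (k : ℕ) (hk : k ≤ n) :
    (-(n : ℝ) + k + k * η) * u k 0 + η * u k 1 = 0 := by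
  subst hu
  simp only []
  have hA : (0 : ℕ) - k = 0 := by omega
  have hB : min 0 (n - k) = 0 := by omega
  rw [hA, hB, show Finset.Icc (0:ℕ) 0 = {0} from rfl, Finset.sum_singleton]
  rcases Nat.eq_zero_or_pos k with hk0 | hk1
  · subst hk0
    have h1 : min 1 (n - 0) = 1 := by omega
    rw [h1, show (1:ℕ) - 0 = 1 from rfl,
      show Finset.Icc (1:ℕ) 1 = {1} from rfl, Finset.sum_singleton]
    have hp : η * η ^ (n - 1) = η ^ n := by
      rw [← pow_succ']; congr 1; omega
    simp only [Nat.sub_zero, Nat.choose_zero_right, Nat.choose_one_right,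
      Nat.sub_self, pow_zero]
    rw [← hp]
    push_cast
    ring
  · rcases Nat.lt_or_ge k n with hkn | hkn
    · -- 1 ≤ k < n
      have h1 : min 1 (n - k) = 1 := by omega
      have h2 : (1 : ℕ) - k = 0 := by omega
      rw [h1, h2, show Finset.Icc (0:ℕ) 1 = {0, 1} from rfl,
        Finset.sum_insert (by simp), Finset.sum_singleton]
      have hp : η * η ^ (n - k - 1) = η ^ (n - k) := by
        rw [← pow_succ']; congr 1; omega
      simp only [Nat.sub_zero, Nat.sub_self, Nat.choose_zero_right,
        Nat.choose_one_right, Nat.add_zero, pow_zero, Nat.choose_self]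
      rw [← hp]
      rw [show k + 1 + 1 = k + 2 from rfl, show (-1:ℝ)^(k+1) = -(-1)^k by ring,
        show (-1:ℝ)^(k+2) = (-1)^k by ring]
      have hc : (Nat.cast (n - k) : ℝ) = (n : ℝ) - k := by
        push_cast [Nat.cast_sub (Nat.le_of_lt hkn)]; ring
      rw [hc]
      ring
    · have hkn' : k = n := le_antisymm hk hkn
      subst hkn'
      have h1 : min 1 (k - k) = 0 := by omega
      have h2 : (1 : ℕ) - k = 0 := by omega
      rw [h1, h2, show Finset.Icc (0:ℕ) 0 = {0} from rfl, Finset.sum_singleton]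
      simp only [Nat.sub_self, Nat.sub_zero, Nat.choose_zero_right,
        Nat.choose_one_right, Nat.add_zero, pow_zero]
      ring
end

section
/- Let n, k, ℓ, q be natural numbers with k ≤ n, 1 ≤ ℓ ≤ n−1, 1 ≤ q ≤ n−ℓ, k + q ≤ n, and n + 1 ≤ k + ℓ + q, and set m = k + ℓ + q − n − 1 (so m ≥ 0). Then the following binomial coefficient identity holds (as an identity of integers): −(n−ℓ+1)·C(k, m)·C(n−k, n−k−q) + (k+ℓ−n)·C(k, m+1)·C(n−k, n−k−q) − (k−ℓ)·C(k, m)·C(n−k, n+1−k−q) + (ℓ+1)·C(k, m+1)·C(n−k, n+1−k−q) = 0. -/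
/-- The coefficient of `η^q` in the interior-row eigenvalue equation vanishes:
a binomial coefficient identity over the integers. -/
theorem stmt_8 (n k ℓ q m : ℕ) (hk : k ≤ n) (hℓ1 : 1 ≤ ℓ) (hℓ2 : ℓ ≤ n - 1)
    (hq1 : 1 ≤ q) (hq2 : q ≤ n - ℓ) (hkq : k + q ≤ n) (hm : n + 1 ≤ k + ℓ + q)
    (hmdef : m = k + ℓ + q - (n + 1)) :
    -((n : ℤ) - ℓ + 1) * (Nat.choose k m : ℤ) * (Nat.choose (n - k) (n - k - q) : ℤ) +
      ((k : ℤ) + ℓ - n) * (Nat.choose k (m + 1) : ℤ) * (Nat.choose (n - k) (n - k - q) : ℤ) -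
      ((k : ℤ) - ℓ) * (Nat.choose k m : ℤ) * (Nat.choose (n - k) (n + 1 - k - q) : ℤ) +
      ((ℓ : ℤ) + 1) * (Nat.choose k (m + 1) : ℤ) * (Nat.choose (n - k) (n + 1 - k - q) : ℤ)
      = 0 := by
  have hlq : ℓ + q ≤ n := by omega
  have hmk : m ≤ k := by omega
  have hqnk : n - k - q ≤ n - k := by omega
  have hmz : (m : ℤ) = (k : ℤ) + ℓ + q - n - 1 := by omega
  -- rewrite the second binomial index
  rw [show n + 1 - k - q = (n - k - q) + 1 by omega]
  have h1 := Nat.choose_succ_right_eq k m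
  zify [hmk] at h1
  rw [hmz] at h1
  have h2 := Nat.choose_succ_right_eq (n - k) (n - k - q)
  zify [hqnk] at h2
  have hsub1 : ((n - k - q : ℕ) : ℤ) = (n : ℤ) - k - q := by omega
  have hsub2 : ((n - k : ℕ) : ℤ) = (n : ℤ) - k := by omega
  rw [hsub1, hsub2] at h2
  set A := (Nat.choose k m : ℤ)
  set B := (Nat.choose k (m + 1) : ℤ)
  set C1 := (Nat.choose (n - k) (n - k - q) : ℤ)
  set C2 := (Nat.choose (n - k) ((n - k - q) + 1) : ℤ)
  have hP : ((k : ℤ) + ℓ + q - n) ≠ 0 := by omega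
  have hQ : ((n : ℤ) + 1 - k - q) ≠ 0 := by omega
  apply mul_left_cancel₀ (mul_ne_zero hP hQ)
  ring_nf
  linear_combination (norm := ring_nf)
    (((k:ℤ) + ℓ - n) * ((n:ℤ) + 1 - k - q) * C1 + ((ℓ:ℤ) + 1) * ((n:ℤ) + 1 - k - q) * C2) * h1 +
    (((ℓ:ℤ) + 1) * ((n:ℤ) + 1 - ℓ - q) * A - ((k:ℤ) - ℓ) * ((k:ℤ) + ℓ + q - n) * A) * h2
end

section
/- Let n ≥ 0 and let α, β be real numbers. Let M be the (n+1)×(n+1) real tridiagonal matrix with diagonal entries M_{ℓ,ℓ} = −(n−ℓ)α − ℓβ, superdiagonal entries M_{ℓ,ℓ+1} = (ℓ+1)β, and subdiagonal entries M_{ℓ+1,ℓ} = (n−ℓ)α. Then the vector Q with components Q_k = C(n,k)·α^k·β^{n−k} for k = 0,…,n satisfies M Q = 0; that is, Q lies in the kernel of M and (when nonzero) is an eigenvector of M with eigenvalue 0, describing the equilibrium distribution of the deposition–evaporation model. -/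
lemma key (n k : ℕ) (hk : k ≤ n) (α β : ℝ) :
    ∑ m ∈ Finset.range (n+1),
      (if k = m then -((n:ℝ)-k)*α - (k:ℝ)*β
       else if m = k+1 then ((k:ℝ)+1)*β
       else if k = m+1 then ((n:ℝ)-m)*α else 0)
      * ((n.choose m : ℝ) * α^m * β^(n-m)) = 0 := by
  have hsplit : ∀ m ∈ Finset.range (n+1),
      (if k = m then -((n:ℝ)-k)*α - (k:ℝ)*β
       else if m = k+1 then ((k:ℝ)+1)*β
       else if k = m+1 then ((n:ℝ)-m)*α else 0)
      * ((n.choose m : ℝ) * α^m * β^(n-m))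
      = (if k = m then (-((n:ℝ)-k)*α - (k:ℝ)*β) * ((n.choose m : ℝ) * α^m * β^(n-m)) else 0)
        + (if m = k+1 then (((k:ℝ)+1)*β) * ((n.choose m : ℝ) * α^m * β^(n-m)) else 0)
        + (if k = m+1 then (((n:ℝ)-m)*α) * ((n.choose m : ℝ) * α^m * β^(n-m)) else 0) := by
    intro m _
    split_ifs <;> first | ring1 | omega
  rw [Finset.sum_congr rfl hsplit]
  rw [Finset.sum_add_distrib, Finset.sum_add_distrib,
    Finset.sum_ite_eq (Finset.range (n+1)) k, Finset.sum_ite_eq' (Finset.range (n+1)) (k+1)]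
  have hh1 : ∀ m, m + 1 ≤ n → ((n.choose (m+1)):ℝ) * ((m:ℝ)+1) = (n.choose m : ℝ) * ((n:ℝ) - m) := by
    intro m hm
    have := Nat.choose_succ_right_eq n m
    have hc : ((n.choose (m+1) * (m+1) : ℕ) : ℝ) = ((n.choose m * (n - m) : ℕ) : ℝ) := by
      exact_mod_cast congrArg (Nat.cast (R := ℝ)) this
    rw [Nat.cast_mul, Nat.cast_mul, Nat.cast_sub (by omega)] at hc
    push_cast at hc ⊢; linarith
  cases k with
  | zero =>
    simp only [Finset.mem_range, Nat.lt_succ_iff, Nat.le_refl, if_true, Nat.zero_le]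
    have h3 : ∀ x ∈ Finset.range (n+1), (if 0 = x + 1 then ((n:ℝ) - x) * α * (↑(n.choose x) * α ^ x * β ^ (n - x)) else 0) = 0 := by
      intro x _; simp
    rw [Finset.sum_congr rfl h3, Finset.sum_const_zero]
    rcases Nat.eq_zero_or_pos n with hn | hn
    · subst hn; norm_num
    · obtain ⟨m, rfl⟩ : ∃ m, n = m + 1 := ⟨n - 1, by omega⟩
      have h1 : (((m+1).choose 1 : ℕ) : ℝ) = (m:ℝ) + 1 := by
        rw [Nat.choose_one_right]; push_cast; ring
      simp only [Nat.lt_succ_iff, if_pos (by omega : 0 + 1 ≤ m + 1)]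
      have e1 : m + 1 - 0 = m + 1 := by omega
      have e2 : m + 1 - (0 + 1) = m := by omega
      rw [e1, e2, pow_succ]
      simp only [Nat.choose_zero_right, Nat.cast_one]
      push_cast
      linear_combination (β ^ m * α * β) * h1
  | succ j =>
    have hjn : j + 1 ≤ n := hk
    simp only [add_left_inj, Finset.sum_ite_eq, Finset.mem_range, Nat.lt_succ_iff,
      if_pos hjn, if_pos (by omega : j ≤ n)]
    have h2 := hh1 j (by omega)
    rcases eq_or_lt_of_le hjn with hn | hn
    · rw [if_neg (by omega)]
      have e0 : n - (j+1) = 0 := by omega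
      have e1 : n - j = 1 := by omega
      rw [e0, e1, pow_zero, pow_one]
      have hnr : (n:ℝ) = (j:ℝ) + 1 := by rw [← hn]; push_cast; ring
      rw [hnr] at h2 ⊢
      push_cast at h2 ⊢
      linear_combination (-β * α ^ (j+1)) * h2
    · rw [if_pos (by omega)]
      have h1 := hh1 (j+1) (by omega)
      have e1 : n - j = (n - (j+2)) + 2 := by omega
      have e2 : n - (j+1) = (n - (j+2)) + 1 := by omega
      rw [e1, e2, pow_succ, pow_succ, pow_succ]
      push_cast at h1 h2 ⊢
      linear_combination (β ^ (n - (j+2)) * β * α ^ (j+1) * α) * h1 - (α ^ (j+1) * β ^ (n-(j+2)) * β * β) * h2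

set_option maxHeartbeats 1000000 in
/-- The equilibrium vector `Q_k = C(n,k) α^k β^{n-k}` lies in the kernel of the
deposition–evaporation matrix `M`. -/
theorem stmt_9 (n : ℕ) (α β : ℝ)
    (M : Matrix (Fin (n + 1)) (Fin (n + 1)) ℝ)
    (hM : M = Matrix.of fun i j : Fin (n + 1) =>
      if i.val = j.val then -((n : ℝ) - i.val) * α - (i.val : ℝ) * β
      else if j.val = i.val + 1 then ((i.val : ℝ) + 1) * β
      else if i.val = j.val + 1 then ((n : ℝ) - j.val) * α
      else 0)
    (Q : Fin (n + 1) → ℝ)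
    (hQ : Q = fun k : Fin (n + 1) =>
      (Nat.choose n k.val : ℝ) * α ^ k.val * β ^ (n - k.val)) :
    M.mulVec Q = 0 := by
  subst hM hQ
  funext i
  simp only [Matrix.mulVec, dotProduct, Matrix.of_apply, Pi.zero_apply]
  rw [Fin.sum_univ_eq_sum_range (fun m =>
      (if i.val = m then -((n:ℝ)-i.val)*α - (i.val:ℝ)*β
       else if m = i.val+1 then ((i.val:ℝ)+1)*β
       else if i.val = m+1 then ((n:ℝ)-m)*α else 0)
      * ((n.choose m : ℝ) * α^m * β^(n-m)))]
  exact key n i.val (Nat.lt_succ_iff.mp i.isLt) α β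
end

section
/- Let n ≥ 0 and let S be the (n+1)×(n+1) real tridiagonal matrix with zero main diagonal, superdiagonal entries S_{ℓ,ℓ+1} = ℓ+1 for ℓ = 0,…,n−1, and subdiagonal entries S_{ℓ+1,ℓ} = n−ℓ for ℓ = 0,…,n−1 (so the superdiagonal reads 1, 2, …, n and the subdiagonal reads n, n−1, …, 1). Then the characteristic polynomial of S is det(x·I − S) = ∏_{k=0}^{n} (x − (2k − n)); in particular, the eigenvalues of S are exactly the integers 2k − n for k = 0, 1, …, n. -/
namespace SylkAux

open Polynomial


lemma sylk_deriv (a b : ℕ) :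
    (1 - X ^ 2) * derivative ((1 + X) ^ a * (1 - X) ^ b : ℝ[X])
      + C ((a : ℝ) + b) * X * ((1 + X) ^ a * (1 - X) ^ b)
    = C ((a : ℝ) - b) * ((1 + X) ^ a * (1 - X) ^ b) := by
  have h2 : (1 - X ^ 2 : ℝ[X]) = (1 + X) * (1 - X) := by ring
  rcases a with _ | a <;> rcases b with _ | b <;>
    rw [h2] <;>
    simp only [derivative_mul, derivative_pow, derivative_one, derivative_X, derivative_add,
      derivative_sub, Nat.add_sub_cancel, pow_zero, Nat.cast_zero, Nat.cast_succ] <;>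
    simp only [C_add, C_sub, C_eq_natCast, C_1, C_0, pow_succ] <;> ring

lemma sylk_id (n k : ℕ) (hk : k ≤ n) :
    derivative ((1 + X) ^ k * (1 - X) ^ (n - k) : ℝ[X])
      - derivative ((1 + X) ^ k * (1 - X) ^ (n - k) : ℝ[X]) * X ^ 2
      + C (n : ℝ) * (((1 + X) ^ k * (1 - X) ^ (n - k)) * X)
    = C (2 * (k : ℝ) - n) * ((1 + X) ^ k * (1 - X) ^ (n - k)) := by
  have h1 : ((k:ℝ) + ((n - k : ℕ) : ℝ)) = (n : ℝ) := by
    push_cast [Nat.cast_sub hk]; ring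
  have h2 : ((k:ℝ) - ((n - k : ℕ) : ℝ)) = 2 * (k : ℝ) - n := by
    push_cast [Nat.cast_sub hk]; ring
  have := sylk_deriv k (n - k)
  rw [h1, h2] at this
  rw [← this]; ring

lemma sylk_rec0 (n k : ℕ) (hk : k ≤ n) :
    ((1 + X) ^ k * (1 - X) ^ (n - k) : ℝ[X]).coeff 1
      = (2 * (k : ℝ) - n) * ((1 + X) ^ k * (1 - X) ^ (n - k) : ℝ[X]).coeff 0 := by
  have h := congrArg (fun p => p.coeff 0) (sylk_id n k hk)
  simp only [coeff_add, coeff_sub, coeff_C_mul, coeff_derivative, mul_coeff_zero,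
    coeff_X_zero, coeff_X_pow, coeff_one_zero] at h ⊢
  norm_num at h ⊢
  linarith [h]

lemma sylk_rec (n k : ℕ) (hk : k ≤ n) (m : ℕ) :
    ((m:ℝ) + 2) * ((1 + X) ^ k * (1 - X) ^ (n - k) : ℝ[X]).coeff (m + 2)
      + ((n:ℝ) - m) * ((1 + X) ^ k * (1 - X) ^ (n - k) : ℝ[X]).coeff m
    = (2 * (k : ℝ) - n) * ((1 + X) ^ k * (1 - X) ^ (n - k) : ℝ[X]).coeff (m + 1) := by
  have h := congrArg (fun p => p.coeff (m + 1)) (sylk_id n k hk)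
  rcases m with _ | m
  · simp only [coeff_add, coeff_sub, coeff_C_mul, coeff_mul_X, coeff_mul_X_pow',
      coeff_derivative, Nat.cast_zero] at h
    norm_num at h ⊢
    linarith [h]
  · have h2 : m + 1 + 1 - 2 = m := by omega
    simp only [coeff_add, coeff_sub, coeff_C_mul, coeff_mul_X, coeff_mul_X_pow', h2,
      coeff_derivative] at h
    rw [if_pos (by omega)] at h
    push_cast at h ⊢
    linarith [h]


lemma sylk_deg (n k : ℕ) (hk : k ≤ n) {j : ℕ} (hj : n < j) :
    ((1 + X) ^ k * (1 - X) ^ (n - k) : ℝ[X]).coeff j = 0 := by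
  apply coeff_eq_zero_of_natDegree_lt
  calc ((1 + X) ^ k * (1 - X) ^ (n - k) : ℝ[X]).natDegree
      ≤ ((1 + X : ℝ[X]) ^ k).natDegree + ((1 - X : ℝ[X]) ^ (n - k)).natDegree :=
        natDegree_mul_le
    _ ≤ k * (1 + X : ℝ[X]).natDegree + (n - k) * (1 - X : ℝ[X]).natDegree := by
        gcongr <;> exact natDegree_pow_le
    _ ≤ k * 1 + (n - k) * 1 := by
        gcongr <;>
        · apply le_trans (natDegree_add_le _ _) <;> simp [natDegree_neg]
    _ ≤ n := by omega
    _ < j := hj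

lemma sylk_c0 (n k : ℕ) : ((1 + X) ^ k * (1 - X) ^ (n - k) : ℝ[X]).coeff 0 = 1 := by
  rw [coeff_zero_eq_eval_zero]; simp

lemma sylk_mulvec (n k : ℕ) (hk : k ≤ n)
    (S : Matrix (Fin (n + 1)) (Fin (n + 1)) ℝ)
    (hS : S = Matrix.of fun i j : Fin (n + 1) =>
      if j.val = i.val + 1 then ((i.val : ℝ) + 1)
      else if i.val = j.val + 1 then ((n : ℝ) - j.val)
      else 0) :
    S.mulVec (fun j : Fin (n + 1) => ((1 + X) ^ k * (1 - X) ^ (n - k) : ℝ[X]).coeff j)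
      = (2 * (k : ℝ) - n) • fun j : Fin (n + 1) =>
          ((1 + X) ^ k * (1 - X) ^ (n - k) : ℝ[X]).coeff j := by
  subst hS
  set f : ℝ[X] := (1 + X) ^ k * (1 - X) ^ (n - k) with hf
  funext i
  have hstep : (Matrix.of fun i j : Fin (n + 1) =>
      if j.val = i.val + 1 then ((i.val : ℝ) + 1)
      else if i.val = j.val + 1 then ((n : ℝ) - j.val)
      else 0).mulVec (fun j : Fin (n + 1) => f.coeff j) i
      = ∑ j ∈ Finset.range (n + 1),
          (if j = (i:ℕ) + 1 then (((i:ℕ) : ℝ) + 1) else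
            if (i:ℕ) = j + 1 then ((n : ℝ) - j) else 0) * f.coeff j := by
    rw [Matrix.mulVec, dotProduct,
      ← Fin.sum_univ_eq_sum_range (fun j => (if j = (i:ℕ) + 1 then (((i:ℕ) : ℝ) + 1) else
            if (i:ℕ) = j + 1 then ((n : ℝ) - j) else 0) * f.coeff j) (n+1)]
    rfl
  rw [hstep]
  have hsplit : ∀ j ∈ Finset.range (n + 1),
      (if j = (i:ℕ) + 1 then (((i:ℕ) : ℝ) + 1) else
        if (i:ℕ) = j + 1 then ((n : ℝ) - j) else 0) * f.coeff j
      = (if j = (i:ℕ) + 1 then (((i:ℕ) : ℝ) + 1) * f.coeff j else 0)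
        + (if (i:ℕ) = j + 1 then ((n : ℝ) - j) * f.coeff j else 0) := by
    intro j _
    split_ifs with h1 h2 <;> first | omega | ring
  rw [Finset.sum_congr rfl hsplit, Finset.sum_add_distrib]
  have hsum1 : (∑ j ∈ Finset.range (n + 1),
      if j = (i:ℕ) + 1 then (((i:ℕ) : ℝ) + 1) * f.coeff j else 0)
      = (((i:ℕ) : ℝ) + 1) * f.coeff ((i:ℕ) + 1) := by
    rw [Finset.sum_ite_eq']
    by_cases h : (i:ℕ) + 1 ∈ Finset.range (n + 1)
    · rw [if_pos h]
    · rw [if_neg h, sylk_deg n k hk (by simp only [Finset.mem_range, not_lt] at h; omega), mul_zero]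
  rw [hsum1]
  simp only [Pi.smul_apply, smul_eq_mul]
  rcases hi : (i : ℕ) with _ | m
  · have hsum2 : (∑ j ∈ Finset.range (n + 1),
        if 0 = j + 1 then ((n : ℝ) - j) * f.coeff j else 0) = 0 := by
      apply Finset.sum_eq_zero
      intro j _
      rw [if_neg (by omega)]
    rw [hsum2]
    have h0 := sylk_rec0 n k hk
    rw [← hf] at h0
    push_cast
    linarith [h0]
  · have hsum2 : (∑ j ∈ Finset.range (n + 1),
        if m + 1 = j + 1 then ((n : ℝ) - j) * f.coeff j else 0)
        = ((n : ℝ) - m) * f.coeff m := by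
      have hc : ∀ j ∈ Finset.range (n + 1),
          (if m + 1 = j + 1 then ((n : ℝ) - j) * f.coeff j else 0)
          = (if j = m then ((n : ℝ) - j) * f.coeff j else 0) := by
        intro j _
        congr 1
        rw [eq_iff_iff]
        omega
      rw [Finset.sum_congr rfl hc, Finset.sum_ite_eq']
      rw [if_pos (by simp; omega)]
    rw [hsum2]
    have hr := sylk_rec n k hk m
    rw [← hf] at hr
    have e1 : m + 1 + 1 = m + 2 := by omega
    rw [e1]
    push_cast
    linarith [hr]

lemma sylk_eval_charpoly {m : Type*} [Fintype m] [DecidableEq m]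
    (M : Matrix m m ℝ) (x : ℝ) :
    M.charpoly.eval x = (x • (1 : Matrix m m ℝ) - M).det := by
  rw [Matrix.charpoly, ← Polynomial.coe_evalRingHom, RingHom.map_det]
  congr 1
  ext i j
  by_cases h : i = j <;>
    simp [Matrix.charmatrix_apply, Matrix.diagonal_apply, Matrix.one_apply, h]

lemma sylk_det (n k : ℕ) (hk : k ≤ n)
    (S : Matrix (Fin (n + 1)) (Fin (n + 1)) ℝ)
    (hS : S = Matrix.of fun i j : Fin (n + 1) =>
      if j.val = i.val + 1 then ((i.val : ℝ) + 1)
      else if i.val = j.val + 1 then ((n : ℝ) - j.val)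
      else 0) :
    ((2 * (k : ℝ) - n) • (1 : Matrix (Fin (n + 1)) (Fin (n + 1)) ℝ) - S).det = 0 := by
  rw [← Matrix.exists_mulVec_eq_zero_iff]
  refine ⟨fun j : Fin (n + 1) => ((1 + X) ^ k * (1 - X) ^ (n - k) : ℝ[X]).coeff j, ?_, ?_⟩
  · intro h
    have h0 := congrFun h 0
    rw [show ((0 : Fin (n + 1)) : ℕ) = 0 from rfl, sylk_c0 n k] at h0
    simpa using h0
  · rw [Matrix.sub_mulVec, Matrix.smul_mulVec, Matrix.one_mulVec,
      sylk_mulvec n k hk S hS, sub_self]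


end SylkAux

open SylkAux in
open Polynomial in
/-- The characteristic polynomial of the `(n+1)×(n+1)` Sylvester–Kac matrix is
`∏_{k=0}^{n} (x - (2k - n))`; in particular its eigenvalues are exactly the
integers `2k - n` for `0 ≤ k ≤ n`. -/
theorem stmt_13 (n : ℕ)
    (S : Matrix (Fin (n + 1)) (Fin (n + 1)) ℝ)
    (hS : S = Matrix.of fun i j : Fin (n + 1) =>
      if j.val = i.val + 1 then ((i.val : ℝ) + 1)
      else if i.val = j.val + 1 then ((n : ℝ) - j.val)
      else 0) :
    (S.charpoly = ∏ k ∈ Finset.range (n + 1), (X - C (2 * (k : ℝ) - n))) ∧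
      spectrum ℝ S = {x : ℝ | ∃ k : ℕ, k ≤ n ∧ x = 2 * (k : ℝ) - n} := by
  have hroot : ∀ k : ℕ, k ≤ n → S.charpoly.eval (2 * (k : ℝ) - n) = 0 := by
    intro k hk
    rw [sylk_eval_charpoly]
    exact sylk_det n k hk S hS
  have hinj : Function.Injective (fun k : ℕ => 2 * (k : ℝ) - n) := by
    intro a b h
    simp only at h
    have : (a : ℝ) = b := by linarith
    exact_mod_cast this
  have hdvd : (∏ k ∈ Finset.range (n + 1), (X - C (2 * (k : ℝ) - n))) ∣ S.charpoly := by
    apply Finset.prod_dvd_of_coprime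
    · exact (Polynomial.pairwise_coprime_X_sub_C hinj).set_pairwise _
    · intro k hkm
      exact dvd_iff_isRoot.mpr
        (hroot k (Nat.lt_succ_iff.mp (Finset.mem_range.mp hkm)))
  have hqm : (∏ k ∈ Finset.range (n + 1), (X - C (2 * (k : ℝ) - n))).Monic :=
    monic_prod_of_monic _ _ fun k _ => monic_X_sub_C _
  have hqdeg : (∏ k ∈ Finset.range (n + 1), (X - C (2 * (k : ℝ) - n))).natDegree = n + 1 := by
    rw [natDegree_prod _ _ fun k _ => X_sub_C_ne_zero _]
    simp only [natDegree_X_sub_C]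
    simp
  have hpdeg : S.charpoly.natDegree = n + 1 := by
    rw [Matrix.charpoly_natDegree_eq_dim]
    simp
  have h1 : S.charpoly = ∏ k ∈ Finset.range (n + 1), (X - C (2 * (k : ℝ) - n)) :=
    eq_of_monic_of_dvd_of_natDegree_le hqm (Matrix.charpoly_monic S) hdvd
      (by rw [hpdeg, hqdeg])
  refine ⟨h1, ?_⟩
  ext x
  simp only [Set.mem_setOf_eq, spectrum.mem_iff, Algebra.algebraMap_eq_smul_one,
    Matrix.isUnit_iff_isUnit_det, isUnit_iff_ne_zero, not_not, ← sylk_eval_charpoly, h1,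
    eval_prod, eval_sub, eval_X, eval_C, Finset.prod_eq_zero_iff, Finset.mem_range,
    Nat.lt_succ_iff, sub_eq_zero]
end

section
/- Let a and λ be real numbers and let n ≥ 1. For an integer m ≥ 0, let T_m denote the (m+1)×(m+1) real tridiagonal matrix with all diagonal entries equal to λ, superdiagonal entries (T_m)_{ℓ,ℓ+1} = (ℓ+1)·a for ℓ = 0,…,m−1, and subdiagonal entries (T_m)_{ℓ+1,ℓ} = (m−ℓ)·a for ℓ = 0,…,m−1 (so the superdiagonal is a, 2a, …, ma and the subdiagonal is ma, …, 2a, a); set det T_{−1} = 1 when needed. Then det T_n = (λ² − n²·a²) · det T_{n−2}. -/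
open Polynomial

lemma mz_poly (k l : ℕ) :
    (1 - X^2 : ℝ[X]) * derivative ((1-X)^k * (1+X)^l)
      = ((l : ℝ[X]) - (k : ℝ[X]) - ((k : ℝ[X]) + (l : ℝ[X])) * X) * ((1-X)^k * (1+X)^l) := by
  have d1 : derivative (1 + X : ℝ[X]) = 1 := by simp
  have d2 : derivative (1 - X : ℝ[X]) = -1 := by simp
  induction k with
  | zero =>
    simp only [pow_zero, one_mul]
    induction l with
    | zero => simp
    | succ l ih =>
      rw [show ((1+X:ℝ[X])^(l+1)) = (1+X)*(1+X)^l from by ring, derivative_mul, d1]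
      push_cast
      push_cast at ih
      linear_combination ((1:ℝ[X]) + X) * ih
  | succ k ih =>
    rw [show ((1-X:ℝ[X])^(k+1) * (1+X)^l) = (1-X)*((1-X)^k*(1+X)^l) from by ring,
      derivative_mul, d2]
    push_cast
    push_cast at ih
    linear_combination ((1:ℝ[X]) - X) * ih

lemma mz_poly' (k l : ℕ) :
    derivative ((1-X)^k * (1+X)^l) - derivative ((1-X)^k * (1+X)^l) * X^2
      = C (l:ℝ) * ((1-X)^k * (1+X)^l) - C (k:ℝ) * ((1-X)^k * (1+X)^l)
        - C (k:ℝ) * (X * ((1-X)^k * (1+X)^l)) - C (l:ℝ) * (X * ((1-X)^k * (1+X)^l)) := by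
  have h := mz_poly k l
  simp only [← C_eq_natCast] at h
  linear_combination h

lemma mzc0 (k l : ℕ) :
    ((1-X:ℝ[X])^k*(1+X)^l).coeff 1 = ((l:ℝ) - (k:ℝ)) * ((1-X:ℝ[X])^k*(1+X)^l).coeff 0 := by
  have h := congrArg (fun q : ℝ[X] => q.coeff 0) (mz_poly' k l)
  simp only [coeff_sub, coeff_C_mul, coeff_derivative, coeff_mul_X_pow', coeff_X_mul_zero,
    Nat.cast_zero, mul_zero, if_neg (by omega : ¬ (2 ≤ 0))] at h
  push_cast at h
  linarith

lemma mzcS (k l j : ℕ) :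
    ((j:ℝ)+2) * ((1-X:ℝ[X])^k*(1+X)^l).coeff (j+2)
      + ((k:ℝ)+(l:ℝ)-(j:ℝ)) * ((1-X:ℝ[X])^k*(1+X)^l).coeff j
      = ((l:ℝ)-(k:ℝ)) * ((1-X:ℝ[X])^k*(1+X)^l).coeff (j+1) := by
  have h := congrArg (fun q : ℝ[X] => q.coeff (j+1)) (mz_poly' k l)
  simp only [coeff_sub, coeff_C_mul, coeff_derivative, coeff_mul_X_pow', coeff_X_mul] at h
  rcases j with _ | j
  · simp only [if_neg (by omega : ¬ (2 ≤ 0 + 1))] at h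
    push_cast at h ⊢
    linarith
  · rw [if_pos (by omega : 2 ≤ j + 1 + 1), show j + 1 + 1 - 2 = j from by omega] at h
    push_cast at h ⊢
    linarith

noncomputable def mzp (m k : ℕ) : ℝ[X] := (1-X)^k * (1+X)^(m-1-k)

noncomputable def mzP (m : ℕ) : Matrix (Fin m) (Fin m) ℝ :=
  Matrix.of fun i k => (mzp m k).coeff i

lemma mzp_natDegree_le (m k : ℕ) (hk : k < m) : (mzp m k).natDegree ≤ m - 1 := by
  unfold mzp
  refine le_trans (natDegree_mul_le) ?_
  have h1 : (1 - X : ℝ[X]).natDegree ≤ 1 :=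
    le_trans (natDegree_sub_le _ _) (by simp)
  have h2 : (1 + X : ℝ[X]).natDegree ≤ 1 :=
    le_trans (natDegree_add_le _ _) (by simp)
  calc ((1-X:ℝ[X])^k).natDegree + ((1+X:ℝ[X])^(m-1-k)).natDegree
      ≤ k * 1 + (m-1-k) * 1 :=
        add_le_add (le_trans (natDegree_pow_le) (by nlinarith))
          (le_trans (natDegree_pow_le) (by nlinarith))
    _ ≤ m - 1 := by omega

lemma mzU_mul (m : ℕ) (a : ℝ) (i k : Fin m) :
    ((Matrix.of fun i j : Fin m => if (j:ℕ) = (i:ℕ)+1 then (((i:ℕ):ℝ)+1)*a else 0) * mzP m) i k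
      = (((i:ℕ):ℝ)+1)*a * (mzp m k).coeff ((i:ℕ)+1) := by
  rw [Matrix.mul_apply]
  rcases Nat.lt_or_ge ((i:ℕ)+1) m with h | h
  · rw [Finset.sum_congr rfl (g := fun j => if j = (⟨(i:ℕ)+1, h⟩ : Fin m) then
      ((((i:ℕ):ℝ)+1)*a) * (mzP m) j k else 0) ?_]
    · rw [Finset.sum_ite_eq' Finset.univ]
      simp [mzP]
    · intro j _
      simp only [Matrix.of_apply]
      by_cases hj : (j:ℕ) = (i:ℕ)+1
      · rw [if_pos hj, if_pos (by exact Fin.ext hj)]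
      · rw [if_neg hj, if_neg (by intro hc; exact hj (by rw [hc]))]
        simp
  · rw [Finset.sum_eq_zero, coeff_eq_zero_of_natDegree_lt, mul_zero]
    · exact lt_of_le_of_lt (mzp_natDegree_le m k k.isLt) (by omega)
    · intro j _
      simp only [Matrix.of_apply]
      rw [if_neg (by omega : ¬ ((j:ℕ) = (i:ℕ)+1))]
      simp

lemma mzL_mul0 (m : ℕ) (a : ℝ) (i k : Fin m) (hi : (i:ℕ) = 0) :
    ((Matrix.of fun i j : Fin m => if (i:ℕ) = (j:ℕ)+1 then ((m:ℝ)-1-(j:ℕ))*a else 0) * mzP m) i k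
      = 0 := by
  rw [Matrix.mul_apply, Finset.sum_eq_zero]
  intro j _
  simp only [Matrix.of_apply]
  rw [if_neg (by omega)]
  simp

lemma mzL_mul (m : ℕ) (a : ℝ) (i k : Fin m) (t : ℕ) (ht : (i:ℕ) = t+1) :
    ((Matrix.of fun i j : Fin m => if (i:ℕ) = (j:ℕ)+1 then ((m:ℝ)-1-(j:ℕ))*a else 0) * mzP m) i k
      = ((m:ℝ)-((i:ℕ):ℝ))*a*(mzp m k).coeff t := by
  have ht' : t < m := by omega
  have hir : ((i:ℕ):ℝ) = (t:ℝ)+1 := by exact_mod_cast congrArg (Nat.cast : ℕ → ℝ) ht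
  rw [Matrix.mul_apply]
  rw [Finset.sum_congr rfl (g := fun j => if j = (⟨t, ht'⟩ : Fin m) then
      (((m:ℝ)-((i:ℕ):ℝ))*a) * (mzP m) j k else 0) ?_]
  · rw [Finset.sum_ite_eq' Finset.univ]
    simp [mzP]
  · intro j _
    simp only [Matrix.of_apply]
    by_cases hj : (i:ℕ) = (j:ℕ)+1
    · have hjt : (j:ℕ) = t := by omega
      rw [if_pos hj, if_pos (Fin.ext hjt)]
      have hjr : ((j:ℕ):ℝ) = (t:ℝ) := by exact_mod_cast congrArg (Nat.cast : ℕ → ℝ) hjt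
      rw [hjr, hir]; ring
    · rw [if_neg hj, if_neg ?_]
      · simp
      · intro hc
        apply hj
        have : (j:ℕ) = t := by rw [hc]
        omega

noncomputable def mzT (m : ℕ) (a lam : ℝ) : Matrix (Fin m) (Fin m) ℝ :=
  Matrix.of fun i j : Fin m =>
    if (i:ℕ) = (j:ℕ) then lam
    else if (j:ℕ) = (i:ℕ)+1 then (((i:ℕ):ℝ)+1)*a
    else if (i:ℕ) = (j:ℕ)+1 then ((m:ℝ)-1-((j:ℕ):ℝ))*a
    else 0

lemma mzT_split (m : ℕ) (a lam : ℝ) :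
    mzT m a lam = lam • (1 : Matrix (Fin m) (Fin m) ℝ)
      + (Matrix.of fun i j : Fin m => if (j:ℕ) = (i:ℕ)+1 then (((i:ℕ):ℝ)+1)*a else 0)
      + (Matrix.of fun i j : Fin m => if (i:ℕ) = (j:ℕ)+1 then ((m:ℝ)-1-((j:ℕ):ℝ))*a else 0) := by
  ext i j
  simp only [mzT, Matrix.add_apply, Matrix.smul_apply, Matrix.one_apply, Matrix.of_apply,
    smul_eq_mul, Fin.ext_iff]
  split_ifs <;> first | omega | ring

lemma mz_key (m : ℕ) (a lam : ℝ) :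
    mzT m a lam * mzP m
      = mzP m * Matrix.diagonal (fun k : Fin m => lam + ((m:ℝ)-1-2*((k:ℕ):ℝ))*a) := by
  ext i k
  rw [mzT_split, Matrix.add_mul, Matrix.add_mul, Matrix.smul_mul, Matrix.one_mul,
    Matrix.add_apply, Matrix.add_apply, Matrix.smul_apply, Matrix.mul_diagonal, smul_eq_mul,
    mzU_mul]
  have hk : (k:ℕ) < m := k.isLt
  have hl : ((m - 1 - (k:ℕ) : ℕ) : ℝ) = (m:ℝ) - 1 - ((k:ℕ):ℝ) := by
    push_cast [Nat.cast_sub (by omega : (k:ℕ) ≤ m - 1), Nat.cast_sub (by omega : 1 ≤ m)]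
    ring
  rcases Nat.eq_zero_or_eq_succ_pred (i:ℕ) with hi | hi
  · rw [mzL_mul0 m a i k hi]
    have h0 := mzc0 (k:ℕ) (m - 1 - (k:ℕ))
    rw [hl] at h0
    simp only [mzP, Matrix.of_apply, mzp] at *
    rw [hi]
    simp only [Nat.cast_zero, zero_add, show (0:ℕ)+1 = 1 from rfl]
    linear_combination a * h0
  · set t := (i:ℕ) - 1 with htdef
    have ht : (i:ℕ) = t + 1 := hi
    rw [mzL_mul m a i k t ht]
    have hS := mzcS (k:ℕ) (m - 1 - (k:ℕ)) t
    rw [hl] at hS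
    have hir : ((i:ℕ):ℝ) = (t:ℝ)+1 := by exact_mod_cast congrArg (Nat.cast : ℕ → ℝ) ht
    simp only [mzP, Matrix.of_apply, mzp] at *
    rw [ht]
    rw [show t + 1 + 1 = t + 2 from rfl]
    push_cast
    linear_combination a * hS

lemma mz_det (m : ℕ) (a lam : ℝ) :
    (mzT m a lam).det = ∏ k : Fin m, (lam + ((m:ℝ)-1-2*((k:ℕ):ℝ))*a) := by
  by_cases ha : a = 0
  · subst ha
    have : mzT m 0 lam = Matrix.diagonal (fun _ : Fin m => lam) := by
      ext i j
      simp only [mzT, Matrix.of_apply, Matrix.diagonal_apply, Fin.ext_iff]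
      split_ifs <;> first | omega | ring
    rw [this, Matrix.det_diagonal]
    simp
  · set μ : Fin m → ℝ := fun k => lam + ((m:ℝ)-1-2*((k:ℕ):ℝ))*a with hμ
    set v : Fin m → (Fin m → ℝ) := fun k i => mzP m i k with hv
    have inj : Function.Injective μ := by
      intro k k' h
      simp only [hμ] at h
      have h2 : ((m:ℝ)-1-2*((k:ℕ):ℝ))*a = ((m:ℝ)-1-2*((k':ℕ):ℝ))*a := by linarith
      have h3 := mul_right_cancel₀ ha h2
      have h4 : ((k:ℕ):ℝ) = ((k':ℕ):ℝ) := by linarith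
      exact Fin.ext (Nat.cast_injective h4)
    have hev : ∀ k, Module.End.HasEigenvector ((mzT m a lam).mulVecLin : Module.End ℝ (Fin m → ℝ)) (μ k) (v k) := by
      intro k
      constructor
      · rw [Module.End.mem_eigenspace_iff]
        have : (mzT m a lam).mulVecLin (v k) = fun i => (mzT m a lam * mzP m) i k := by
          funext i
          simp [Matrix.mulVecLin, Matrix.mulVec, dotProduct, Matrix.mul_apply, hv]
        rw [this, mz_key]
        funext i
        simp [Matrix.mul_diagonal, hμ, hv, mul_comm]
      · intro h0
        have hm : 0 < m := k.pos
        have := congrFun h0 ⟨0, hm⟩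
        simp only [hv, mzP, Matrix.of_apply, mzp, Pi.zero_apply] at this
        rw [coeff_zero_eq_eval_zero] at this
        simp at this
    have lin : LinearIndependent ℝ v :=
      Module.End.eigenvectors_linearIndependent' ((mzT m a lam).mulVecLin : Module.End ℝ (Fin m → ℝ)) μ inj v hev
    have detP : (mzP m).det ≠ 0 := by
      intro hdet
      obtain ⟨w, hw0, hw⟩ := (Matrix.exists_mulVec_eq_zero_iff).2 hdet
      have hsum : ∑ k, w k • v k = 0 := by
        funext i
        rw [Finset.sum_apply]
        have := congrFun hw i
        simp only [Matrix.mulVec, dotProduct, Pi.zero_apply] at this ⊢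
        simp only [hv, Pi.smul_apply, smul_eq_mul]
        rw [← this]
        exact Finset.sum_congr rfl fun k _ => mul_comm _ _
      have hz := Fintype.linearIndependent_iff.1 lin w hsum
      exact hw0 (funext fun k => hz k)
    have hkey := congrArg Matrix.det (mz_key m a lam)
    rw [Matrix.det_mul, Matrix.det_mul, mul_comm ((mzP m).det) _] at hkey
    have := mul_right_cancel₀ detP hkey
    rw [this, Matrix.det_diagonal]

/-- Mazza's determinant factorization (corrected form from Muir): for the
`(m+1)×(m+1)` tridiagonal matrix `T_m` with diagonal `λ`, superdiagonal
`a, 2a, …, ma` and subdiagonal `ma, …, 2a, a`, one has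
`det T_n = (λ² - n²a²) · det T_{n-2}` for `n ≥ 1`, where `det T_{-1} = 1`.
Here `T m` denotes the `m × m` matrix, i.e. the paper's `T_{m-1}`, so that
`T 0` is the empty matrix with determinant `1`, playing the role of `T_{-1}`. -/
theorem stmt_14 (a lam : ℝ) (n : ℕ) (hn : 1 ≤ n)
    (T : (m : ℕ) → Matrix (Fin m) (Fin m) ℝ)
    (hT : T = fun m => Matrix.of fun i j : Fin m =>
      if i.val = j.val then lam
      else if j.val = i.val + 1 then ((i.val : ℝ) + 1) * a
      else if i.val = j.val + 1 then ((m : ℝ) - 1 - j.val) * a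
      else 0) :
    (T (n + 1)).det = (lam ^ 2 - (n : ℝ) ^ 2 * a ^ 2) * (T (n - 1)).det := by
  have hT' : T = fun m => mzT m a lam := hT
  subst hT'
  simp only []
  rw [mz_det, mz_det]
  rw [Fin.prod_univ_eq_prod_range (fun j : ℕ => lam + (((n+1:ℕ):ℝ) - 1 - 2*(j:ℝ))*a) (n+1),
    Fin.prod_univ_eq_prod_range (fun j : ℕ => lam + (((n-1:ℕ):ℝ) - 1 - 2*(j:ℝ))*a) (n-1)]
  obtain ⟨p, rfl⟩ : ∃ p, n = p + 1 := ⟨n-1, by omega⟩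
  simp only [Nat.add_sub_cancel]
  rw [show p + 1 + 1 = p + 2 from rfl]
  rw [Finset.prod_range_succ, Finset.prod_range_succ']
  rw [Finset.prod_congr rfl (g := fun k =>
      lam + (((p:ℕ):ℝ) - 1 - 2*((k:ℕ):ℝ))*a) ?_]
  · push_cast
    ring
  · intro k _
    push_cast
    ring
end
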